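/- arXiv:2601.06503 — 11 statements merged into one kernel-verified Lean document; each statement's English description precedes it below -/
import Mathlib

section
/- For the alternating binary sequence a_n of length n (starting with 1, with a_k ≠ a_{k+1} for all k), the t-deletion ball D_t(a_n) has cardinality ∑_{i=0}^{t} C(n-t, i), for 0 < t < n. -/
/-- The `t`-deletion ball of a binary sequence `x`: all subsequences of `x`
of length `|x| - t` (i.e., obtained by deleting exactly `t` symbols). -/
def delBall (t : ℕ) (x : List Bool) : Set (List Bool) :=
  {z | z.Sublist x ∧ z.length + t = x.length}

/-- Levenshtein (deletion) distance between binary sequences. -/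
noncomputable def levDist (x y : List Bool) : ℕ :=
  sInf {r | ((delBall r x) ∩ (delBall r y)).Nonempty}

/-- The alternating binary sequence of length `n` starting with `1` (= `true`). -/
def altSeq (n : ℕ) : List Bool :=
  (List.range n).map (fun k => decide (k % 2 = 0))

/-- Bitwise complement of a binary sequence. -/
def compl' (x : List Bool) : List Bool := x.map (fun b => !b)

/-- Elementwise concatenation of sets of sequences. -/
def setConcat (A B : Set (List Bool)) : Set (List Bool) :=
  Set.image2 (· ++ ·) A B

/-- alternating sequence starting with bit `b`. -/
def altB : Bool → ℕ → List Bool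
  | _, 0 => []
  | b, n+1 => b :: altB (!b) n

lemma altB_eq : ∀ (n : ℕ) (b : Bool), altB b n = (List.range n).map (fun k => ((decide (k % 2 = 0)).xor !b)) := by
  intro n
  induction n with
  | zero => intro b; simp [altB]
  | succ n ih =>
    intro b
    rw [List.range_succ_eq_map, List.map_cons, List.map_map]
    show altB b (n+1) = _ :: _
    rw [altB, ih (!b)]
    congr 1
    · simp
    · apply List.map_congr_left
      intro k _
      simp only [Function.comp]
      have : (k + 1) % 2 = 0 ↔ ¬ (k % 2 = 0) := by omega
      rcases Nat.decEq (k % 2) 0 with h | h <;> simp_all <;> cases b <;> simp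

lemma altSeq_eq_altB (n : ℕ) : altSeq n = altB true n := by
  rw [altB_eq, altSeq]
  simp

lemma sublist_cons_of_ne {c b : Bool} {z l : List Bool} (h : c ≠ b) :
    (c :: z).Sublist (b :: l) ↔ (c :: z).Sublist l := by
  constructor
  · intro hs
    cases hs with
    | cons _ h' => exact h'
    | cons_cons => exact absurd rfl h
  · exact fun h' => h'.cons _

lemma sublist_cons_same {b : Bool} {z l : List Bool} :
    (b :: z).Sublist (b :: l) ↔ z.Sublist l := by
  constructor
  · intro hs
    cases hs with
    | cons _ h' => exact (List.sublist_cons_self b z).trans h'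
    | cons_cons => assumption
  · exact fun h' => h'.cons₂ _

/-- minimal length of alternating seq starting with `b` containing `z`. -/
def fA : Bool → List Bool → ℕ
  | _, [] => 0
  | b, c :: z => if c = b then 1 + fA (!b) z else 2 + fA b z

lemma sublist_altB_iff : ∀ (n : ℕ) (b : Bool) (z : List Bool),
    z.Sublist (altB b n) ↔ fA b z ≤ n := by
  intro n
  induction n with
  | zero =>
    intro b z
    cases z with
    | nil => simp [altB, fA]
    | cons c z =>
      refine iff_of_false (by simp [altB]) ?_
      rw [fA]; split <;> omega
  | succ n ih =>
    intro b z
    cases z with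
    | nil => simp [fA]
    | cons c z =>
      rw [show altB b (n+1) = b :: altB (!b) n from rfl]
      by_cases hc : c = b
      · subst hc
        rw [sublist_cons_same, ih, fA, if_pos rfl]
        omega
      · have hb : c = !b := by cases c <;> cases b <;> simp_all
        subst hb
        have e1 : fA b ((!b) :: z) = 2 + fA b z := by
          rw [fA, if_neg (by simp)]
        have e2 : fA (!b) ((!b) :: z) = 1 + fA b z := by
          rw [fA, if_pos rfl, Bool.not_not]
        rw [sublist_cons_of_ne hc, ih, e2, e1]
        omega

/-- encode a list relative to expected bit `b`. -/
def phi : Bool → List Bool → List Bool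
  | _, [] => []
  | b, c :: z => (c != b) :: phi (!c) z

def psi : Bool → List Bool → List Bool
  | _, [] => []
  | b, w :: ws => (if w then !b else b) :: psi (!(if w then !b else b)) ws

lemma psi_phi : ∀ (z : List Bool) (b : Bool), psi b (phi b z) = z := by
  intro z
  induction z with
  | nil => intro b; rfl
  | cons c z ih =>
    intro b
    rw [phi, psi]
    have h : (if (c != b) = true then !b else b) = c := by cases c <;> cases b <;> rfl
    rw [h, ih]

lemma phi_psi : ∀ (w : List Bool) (b : Bool), phi b (psi b w) = w := by
  intro w
  induction w with
  | nil => intro b; rfl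
  | cons c w ih =>
    intro b
    rw [psi, phi]
    cases c <;> cases b <;> simp [ih]

lemma length_phi : ∀ (z : List Bool) (b : Bool), (phi b z).length = z.length := by
  intro z
  induction z with
  | nil => intro b; rfl
  | cons c z ih => intro b; simp [phi, ih]

lemma length_psi : ∀ (w : List Bool) (b : Bool), (psi b w).length = w.length := by
  intro w
  induction w with
  | nil => intro b; rfl
  | cons c w ih => intro b; simp [psi, ih]

lemma fA_eq_weight : ∀ (z : List Bool) (b : Bool),
    fA b z = z.length + (phi b z).count true := by
  intro z
  induction z with
  | nil => intro b; rfl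
  | cons c z ih =>
    intro b
    rw [fA, phi]
    by_cases hc : c = b
    · subst hc
      rw [if_pos rfl, ih]
      simp [List.count_cons]; omega
    · have hb : c = !b := by cases c <;> cases b <;> simp_all
      subst hb
      rw [if_neg hc, ih, Bool.not_not]
      simp [List.count_cons]; omega

lemma pascal_sum (m t : ℕ) :
    ∑ i ∈ Finset.range (t+1), Nat.choose (m+1) i
      = ∑ i ∈ Finset.range (t+1), Nat.choose m i + ∑ i ∈ Finset.range t, Nat.choose m i := by
  induction t with
  | zero => simp
  | succ t ih =>
    rw [Finset.sum_range_succ, ih, Nat.choose_succ_succ,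
      Finset.sum_range_succ (fun i => Nat.choose m i) (t+1),
      Finset.sum_range_succ (fun i => Nat.choose m i) t]
    simp only [Nat.succ_eq_add_one]
    omega

lemma finite_aux (m : ℕ) (P : List Bool → Prop) :
    {w : List Bool | w.length = m ∧ P w}.Finite :=
  (List.finite_length_eq Bool m).subset (fun _ h => h.1)

lemma count_le_ncard : ∀ (m t : ℕ),
    {w : List Bool | w.length = m ∧ w.count true ≤ t}.ncard
      = ∑ i ∈ Finset.range (t+1), Nat.choose m i := by
  intro m
  induction m with
  | zero =>
    intro t
    have hs : {w : List Bool | w.length = 0 ∧ w.count true ≤ t} = {[]} := by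
      ext w
      constructor
      · rintro ⟨h, _⟩; exact List.length_eq_zero_iff.mp h
      · rintro rfl; simp
    rw [hs, Set.ncard_singleton]
    clear hs
    induction t with
    | zero => simp
    | succ t iht => rw [Finset.sum_range_succ, ← iht]; simp
  | succ m ih =>
    intro t
    have hsplit : {w : List Bool | w.length = m + 1 ∧ w.count true ≤ t}
        = (fun w => false :: w) '' {w : List Bool | w.length = m ∧ w.count true ≤ t}
          ∪ (fun w => true :: w) '' {w : List Bool | w.length = m ∧ w.count true + 1 ≤ t} := by
      ext w
      cases w with
      | nil => simp
      | cons b w =>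
        cases b <;> simp [List.count_cons] <;> omega
    have hA := finite_aux m (fun w => w.count true ≤ t)
    have hB := finite_aux m (fun w => w.count true + 1 ≤ t)
    have hdisj : Disjoint ((fun w => false :: w) '' {w : List Bool | w.length = m ∧ w.count true ≤ t})
        ((fun w => true :: w) '' {w : List Bool | w.length = m ∧ w.count true + 1 ≤ t}) := by
      rw [Set.disjoint_left]
      rintro x ⟨u, _, rfl⟩ ⟨v, _, hv⟩
      exact absurd (List.head_eq_of_cons_eq hv.symm) (by simp)
    rw [hsplit, Set.ncard_union_eq hdisj (hA.image _) (hB.image _),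
      Set.ncard_image_of_injective _ (fun a b h => List.tail_eq_of_cons_eq h),
      Set.ncard_image_of_injective _ (fun a b h => List.tail_eq_of_cons_eq h),
      ih t, pascal_sum]
    congr 1
    cases t with
    | zero =>
      have : {w : List Bool | w.length = m ∧ w.count true + 1 ≤ 0} = ∅ := by
        ext w; simp
      simp [this]
    | succ t =>
      have : {w : List Bool | w.length = m ∧ w.count true + 1 ≤ t + 1}
          = {w : List Bool | w.length = m ∧ w.count true ≤ t} := by
        ext w; simp [Nat.succ_le_succ_iff]
      rw [this, ih t]

lemma phi_injective (b : Bool) : Function.Injective (phi b) := by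
  intro u v h
  rw [← psi_phi u b, ← psi_phi v b, h]


/-- For `0 < t < n`, the `t`-deletion ball of the alternating sequence of length `n`
has cardinality the sum of `C(n-t, i)` for `i = 0, ..., t`. -/
theorem stmt0 (n t : ℕ) (h0 : 0 < t) (h1 : t < n) :
    (delBall t (altSeq n)).ncard = ∑ i ∈ Finset.range (t + 1), Nat.choose (n - t) i := by
  have hlen : (altSeq n).length = n := by simp [altSeq]
  have himg : phi true '' (delBall t (altSeq n))
      = {w : List Bool | w.length = n - t ∧ w.count true ≤ t} := by
    ext w
    constructor
    · rintro ⟨z, ⟨hsub, hl⟩, rfl⟩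
      rw [hlen] at hl
      rw [altSeq_eq_altB, sublist_altB_iff, fA_eq_weight] at hsub
      refine ⟨by rw [length_phi]; omega, by omega⟩
    · rintro ⟨hw1, hw2⟩
      refine ⟨psi true w, ⟨?_, ?_⟩, phi_psi w true⟩
      · rw [altSeq_eq_altB, sublist_altB_iff, fA_eq_weight, phi_psi, length_psi]
        omega
      · rw [hlen, length_psi]; omega
  calc (delBall t (altSeq n)).ncard
      = (phi true '' (delBall t (altSeq n))).ncard :=
        (Set.ncard_image_of_injective _ (phi_injective true)).symm
    _ = _ := by rw [himg, count_le_ncard]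
end

section
/- Let x = u ∘ v ∘ w and y = u ∘ ṽ ∘ w be binary sequences (concatenations of the blocks u, v, w and u, ṽ, w). Then D_t(x) ∩ D_s(y) = ⋃_{p+q ≤ min(t,s)} D_p(u) ∘ (D_{t-p-q}(v) ∩ D_{s-p-q}(ṽ)) ∘ D_q(w), where A ∘ B ∘ C denotes the set of concatenations a∘b∘c with a ∈ A, b ∈ B, c ∈ C. -/
/-
The longest prefix `a` of `z` that is a subsequence of `u` is a greedy choice: whenever
`z` is a subsequence of `u ++ m`, the part of `z` placed in `u` is a prefix no longer than `a`,
so the rest `r` of `z` is a subsequence of `m`. Splitting greedily from the left against `u` and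
from the right against `w` writes a common subsequence of `u ++ v ++ w` and `u ++ ṽ ++ w` as
`a ++ b ++ c` with `b` a common subsequence of `v` and `ṽ`; the numbers `p`, `q` of deletions in
`u` and `w` are then read off from the lengths.
-/

namespace List

variable {α : Type*}

theorem exists_greedy_split_left (z u : List α) :
    ∃ a r, z = a ++ r ∧ a <+ u ∧ ∀ m, z <+ u ++ m → r <+ m := by
  classical
  let k := Nat.findGreatest (fun n => z.take n <+ u) z.length
  refine ⟨z.take k, z.drop k, (z.take_append_drop k).symm,
    Nat.findGreatest_spec (P := fun n => z.take n <+ u) (Nat.zero_le _) (by simp), ?_⟩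
  intro m hz
  obtain ⟨a₁, r₁, rfl, ha₁, hr₁⟩ := sublist_append_iff.1 hz
  have hle : a₁.length ≤ k := Nat.le_findGreatest (by simp) (by simpa using ha₁)
  obtain ⟨j, hj⟩ := Nat.exists_eq_add_of_le hle
  rw [hj, drop_length_add_append]
  exact (drop_sublist _ _).trans hr₁

theorem exists_greedy_split_right (z w : List α) :
    ∃ r c, z = r ++ c ∧ c <+ w ∧ ∀ m, z <+ m ++ w → r <+ m := by
  obtain ⟨a, r, hz, haw, hgreedy⟩ := exists_greedy_split_left z.reverse w.reverse
  refine ⟨r.reverse, a.reverse, ?_, reverse_sublist.1 (by simpa using haw), fun m hm => ?_⟩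
  · simpa using congrArg reverse hz
  · simpa using (hgreedy m.reverse (by simpa using hm.reverse)).reverse

theorem exists_split_of_sublist_of_sublist {z u v vt w : List α}
    (hx : z <+ u ++ v ++ w) (hy : z <+ u ++ vt ++ w) :
    ∃ a b c, z = a ++ (b ++ c) ∧ a <+ u ∧ b <+ v ∧ b <+ vt ∧ c <+ w := by
  rw [append_assoc] at hx hy
  obtain ⟨a, r, rfl, hau, hgreedyL⟩ := exists_greedy_split_left z u
  obtain ⟨b, c, rfl, hcw, hgreedyR⟩ := exists_greedy_split_right r w
  exact ⟨a, b, c, rfl, hau, hgreedyR v (hgreedyL _ hx), hgreedyR vt (hgreedyL _ hy), hcw⟩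

end List

theorem mem_delBall_of_sublist {a u : List Bool} (h : a.Sublist u) :
    a ∈ delBall (u.length - a.length) u :=
  ⟨h, by have := h.length_le; omega⟩

theorem append_mem_delBall {a b u v : List Bool} {p r : ℕ}
    (ha : a ∈ delBall p u) (hb : b ∈ delBall r v) : a ++ b ∈ delBall (p + r) (u ++ v) :=
  ⟨ha.1.append hb.1, by have := ha.2; have := hb.2; simp only [List.length_append]; omega⟩

/-- Decomposition of the intersection of deletion balls of two sequences with a
common prefix `u` and common suffix `w`. -/
theorem stmt4 (t s : ℕ) (u v vt w : List Bool) :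
    delBall t (u ++ v ++ w) ∩ delBall s (u ++ vt ++ w)
      = ⋃ (p : ℕ) (q : ℕ) (_ : p + q ≤ min t s),
          setConcat (delBall p u)
            (setConcat (delBall (t - p - q) v ∩ delBall (s - p - q) vt) (delBall q w)) := by
  ext z
  simp only [setConcat, Set.mem_inter_iff, Set.mem_iUnion, Set.mem_image2]
  constructor
  · rintro ⟨⟨hx, hxl⟩, ⟨hy, hyl⟩⟩
    obtain ⟨a, b, c, rfl, hau, hbv, hbvt, hcw⟩ := List.exists_split_of_sublist_of_sublist hx hy
    have := hau.length_le
    have := hbv.length_le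
    have := hbvt.length_le
    have := hcw.length_le
    simp only [List.length_append] at hxl hyl
    refine ⟨u.length - a.length, w.length - c.length, by omega, a, mem_delBall_of_sublist hau,
      b ++ c, ⟨b, ⟨⟨hbv, by omega⟩, ⟨hbvt, by omega⟩⟩, c, mem_delBall_of_sublist hcw, rfl⟩, rfl⟩
  · rintro ⟨p, q, hpq, a, ha, _, ⟨b, ⟨hbv, hbvt⟩, c, hc, rfl⟩, rfl⟩
    rw [List.append_assoc, List.append_assoc]
    constructor
    · simpa [show p + (t - p - q + q) = t by omega] using
        append_mem_delBall ha (append_mem_delBall hbv hc)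
    · simpa [show p + (s - p - q + q) = s by omega] using
        append_mem_delBall ha (append_mem_delBall hbvt hc)
end

section
/- Let x = u ∘ v ∘ w and y = u ∘ ṽ ∘ w be binary sequences with |v| = |ṽ| and d_L(v, ṽ) ≥ t, where d_L denotes Levenshtein (deletion) distance. Then D_t(x) ∩ D_t(y) = u ∘ (D_t(v) ∩ D_t(ṽ)) ∘ w. -/
lemma commonSub_bound {t : ℕ} {v vt : List Bool} (s : List Bool) (hlen : v.length = vt.length)
    (hd : t ≤ levDist v vt) (h1 : s.Sublist v) (h2 : s.Sublist vt) :
    s.length + t ≤ v.length := by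
  have hsv : s.length ≤ v.length := h1.length_le
  have : levDist v vt ≤ v.length - s.length := by
    apply Nat.sInf_le
    exact ⟨s, ⟨h1, by omega⟩, ⟨h2, by omega⟩⟩
  omega

lemma mid_sublist (a b c : List Bool) (m n : ℕ) (ha : a.length ≤ m)
    (h : m + n ≤ a.length + b.length) :
    (((a ++ b ++ c).drop m).take n).Sublist b := by
  obtain ⟨d, rfl⟩ : ∃ d, m = a.length + d := ⟨m - a.length, by omega⟩
  have h1 : (a ++ b ++ c).drop (a.length + d) = b.drop d ++ c := by
    rw [List.append_assoc, List.drop_append]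
    rw [List.drop_of_length_le (by omega), List.nil_append, Nat.add_sub_cancel_left]
    apply List.drop_append_of_le_length
    omega
  have hle : n ≤ (b.drop d).length := by
    simp [List.length_drop]; omega
  rw [h1, List.take_append_of_le_length hle]
  exact (List.take_sublist _ _).trans (List.drop_sublist _ _)

/-- If `v` and `vt` have equal length and Levenshtein distance at least `t`, then the
intersection of the `t`-deletion balls of `u ++ v ++ w` and `u ++ vt ++ w` is
`u ∘ (D_t(v) ∩ D_t(vt)) ∘ w`. -/
theorem stmt5 (t : ℕ) (u v vt w : List Bool) (hlen : v.length = vt.length)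
    (hd : t ≤ levDist v vt) :
    delBall t (u ++ v ++ w) ∩ delBall t (u ++ vt ++ w)
      = setConcat {u} (setConcat (delBall t v ∩ delBall t vt) {w}) := by
  have htv : t ≤ v.length := by
    have := commonSub_bound (t := t) [] hlen hd (List.nil_sublist v) (List.nil_sublist vt)
    simpa using this
  ext z
  constructor
  · rintro ⟨⟨hz1, hl1⟩, hz2, hl2⟩
    simp only [List.length_append] at hl1 hl2
    obtain ⟨p1, c1, hzp1, hp1, hc1⟩ := List.sublist_append_iff.mp hz1
    obtain ⟨a1, b1, hp1e, ha1, hb1⟩ := List.sublist_append_iff.mp hp1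
    obtain ⟨p2, c2, hzp2, hp2, hc2⟩ := List.sublist_append_iff.mp hz2
    obtain ⟨a2, b2, hp2e, ha2, hb2⟩ := List.sublist_append_iff.mp hp2
    have hz1e : z = a1 ++ b1 ++ c1 := by rw [hzp1, hp1e]
    have hz2e : z = a2 ++ b2 ++ c2 := by rw [hzp2, hp2e]
    have la1 : a1.length ≤ u.length := ha1.length_le
    have la2 : a2.length ≤ u.length := ha2.length_le
    have lb1 : b1.length ≤ v.length := hb1.length_le
    have lb2 : b2.length ≤ vt.length := hb2.length_le
    have lc1 : c1.length ≤ w.length := hc1.length_le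
    have lc2 : c2.length ≤ w.length := hc2.length_le
    have lz1 : z.length = a1.length + b1.length + c1.length := by
      simp [hz1e, List.length_append]; omega
    have lz2 : z.length = a2.length + b2.length + c2.length := by
      simp [hz2e, List.length_append]; omega
    set m := max a1.length a2.length with hm
    set k := max c1.length c2.length with hk
    have hm_le : m ≤ u.length := max_le la1 la2
    have hk_le : k ≤ w.length := max_le lc1 lc2
    set n := z.length - m - k with hn
    set s := (z.drop m).take n with hs
    have hsv : s.Sublist v := by
      have : s = ((a1 ++ b1 ++ c1).drop m).take n := by rw [hs, hz1e]
      rw [this]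
      exact (mid_sublist a1 b1 c1 m n (le_max_left _ _)
        (by have := le_max_right c1.length c2.length; omega)).trans hb1
    have hsvt : s.Sublist vt := by
      have : s = ((a2 ++ b2 ++ c2).drop m).take n := by rw [hs, hz2e]
      rw [this]
      exact (mid_sublist a2 b2 c2 m n (le_max_right _ _)
        (by have := le_max_left c1.length c2.length; omega)).trans hb2
    have hslen : s.length = n := by
      rw [hs]; simp [List.length_take, List.length_drop]; omega
    have hbound : s.length + t ≤ v.length := commonSub_bound s hlen hd hsv hsvt
    have hmu : m = u.length := by omega
    have hkw : k = w.length := by omega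
    have hsl : s.length + t = v.length := by omega
    -- z starts with u
    have htake : z.take u.length = u := by
      rcases max_choice a1.length a2.length with h | h
      · have he : a1 = u := ha1.eq_of_length (by omega)
        rw [← he, hz1e, List.append_assoc]
        exact List.take_left
      · have he : a2 = u := ha2.eq_of_length (by omega)
        rw [← he, hz2e, List.append_assoc]
        exact List.take_left
    have hdrop : z.drop (z.length - w.length) = w := by
      rcases max_choice c1.length c2.length with h | h
      · have he : c1 = w := hc1.eq_of_length (by omega)
        have : z.length - w.length = (a1 ++ b1).length := by
          simp [List.length_append]; omega
        rw [this, ← he, hz1e]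
        exact List.drop_left
      · have he : c2 = w := hc2.eq_of_length (by omega)
        have : z.length - w.length = (a2 ++ b2).length := by
          simp [List.length_append]; omega
        rw [this, ← he, hz2e]
        exact List.drop_left
    have hzeq : z = u ++ s ++ w := by
      have h1 : z = z.take u.length ++ z.drop u.length := (List.take_append_drop _ _).symm
      have h2 : z.drop u.length = (z.drop u.length).take n ++ (z.drop u.length).drop n :=
        (List.take_append_drop _ _).symm
      have h3 : (z.drop u.length).take n = s := by rw [hs, hmu]
      have h4 : (z.drop u.length).drop n = w := by
        rw [List.drop_drop]
        have : u.length + n = z.length - w.length := by omega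
        rw [this, hdrop]
      rw [List.append_assoc]
      nth_rewrite 1 [h1]
      rw [htake, h2, h3, h4]
    refine ⟨u, rfl, s ++ w, ?_, by rw [hzeq, List.append_assoc]⟩
    exact ⟨s, ⟨⟨hsv, hsl⟩, ⟨hsvt, by omega⟩⟩, w, rfl, rfl⟩
  · rintro ⟨u', hu', sw, ⟨s, ⟨⟨hsv, hsl⟩, hsvt, hsl2⟩, w', hw', rfl⟩, rfl⟩
    rw [Set.mem_singleton_iff] at hu' hw'
    rw [hu', hw']
    have h1 := ((List.Sublist.refl u).append hsv).append (List.Sublist.refl w)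
    have h2 := ((List.Sublist.refl u).append hsvt).append (List.Sublist.refl w)
    constructor
    · exact ⟨by simpa [List.append_assoc] using h1,
        by simp [List.length_append]; omega⟩
    · exact ⟨by simpa [List.append_assoc] using h2,
        by simp [List.length_append]; omega⟩
end

section
/- Let x, y be binary sequences with |x| = |y| + 1 and y ∉ D_1(x). Then |D_2(x) ∩ D_1(y)| ≤ 3. -/
lemma cons_sublist_of_ne {α} {d a : α} {z l : List α}
    (h : (d::z).Sublist (a::l)) (hne : d ≠ a) : (d::z).Sublist l := by
  cases h with
  | cons _ h => exact h
  | cons_cons => exact absurd rfl hne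

lemma finite_sub {α} [DecidableEq α] (x : List α) : {z : List α | z.Sublist x}.Finite := by
  apply Set.Finite.subset x.sublists.toFinset.finite_toSet
  intro z hz
  simp only [List.coe_toFinset, Set.mem_setOf_eq, List.mem_sublists]
  exact hz

/-- Levenshtein's classical bound: two distinct equal-length words have at most
two common subsequences obtained by a single deletion from each. -/
lemma lev_two : ∀ (u v : List Bool), u ≠ v → u.length = v.length →
    {z : List Bool | z.Sublist u ∧ z.Sublist v ∧ z.length + 1 = u.length}.ncard ≤ 2 := by
  intro u
  induction u with
  | nil =>
    intro v hne hlen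
    exact absurd (List.length_eq_zero_iff.mp hlen.symm).symm hne
  | cons a u' IH =>
    intro v hne hlen
    match v with
    | [] => simp at hlen
    | b :: v' =>
      simp only [List.length_cons, Nat.add_right_cancel_iff] at hlen
      by_cases hab : a = b
      · subst hab
        have hne' : u' ≠ v' := fun hh => hne (by rw [hh])
        have hkey : {z : List Bool | z.Sublist (a::u') ∧ z.Sublist (a::v') ∧ z.length + 1 = (a::u').length}
            = (List.cons a) '' {z : List Bool | z.Sublist u' ∧ z.Sublist v' ∧ z.length + 1 = u'.length} := by
          ext z
          simp only [Set.mem_setOf_eq, Set.mem_image, List.length_cons]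
          constructor
          · rintro ⟨h1, h2, h3⟩
            match z with
            | [] =>
              simp only [List.length_nil, List.length_cons] at h3
              have hu : u' = [] := List.length_eq_zero_iff.mp (by omega)
              have hv : v' = [] := List.length_eq_zero_iff.mp (by rw [hu] at hlen; simpa using hlen.symm)
              exact absurd (hu.trans hv.symm) hne'
            | d :: z' =>
              by_cases hda : d = a
              · subst hda
                exact ⟨z', ⟨List.cons_sublist_cons.mp h1, List.cons_sublist_cons.mp h2,
                  by simp only [List.length_cons] at h3 ⊢; omega⟩, rfl⟩
              · have e1 : d :: z' = u' :=
                  (cons_sublist_of_ne h1 hda).eq_of_length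
                    (by simp only [List.length_cons] at h3 ⊢; omega)
                have e2 : d :: z' = v' :=
                  (cons_sublist_of_ne h2 hda).eq_of_length
                    (by simp only [List.length_cons] at h3 ⊢; omega)
                exact absurd (e1.symm.trans e2) hne'
          · rintro ⟨z', ⟨h1, h2, h3⟩, rfl⟩
            exact ⟨List.cons_sublist_cons.mpr h1, List.cons_sublist_cons.mpr h2, by simp [h3]⟩
        rw [hkey, Set.ncard_image_of_injective _ (fun s t hst => by injection hst)]
        exact IH v' hne' hlen
      · have hsub : {z : List Bool | z.Sublist (a::u') ∧ z.Sublist (b::v') ∧ z.length + 1 = (a::u').length}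
            ⊆ insert u' {v'} := by
          rintro z ⟨h1, h2, h3⟩
          simp only [List.length_cons, Nat.add_right_cancel_iff] at h3
          match z with
          | [] =>
            left
            exact (List.length_eq_zero_iff.mp h3.symm).symm
          | d :: z' =>
            by_cases hda : d = a
            · subst hda
              right
              exact (cons_sublist_of_ne h2 hab).eq_of_length (by omega)
            · left
              exact (cons_sublist_of_ne h1 hda).eq_of_length h3
        calc _ ≤ (insert u' {v'} : Set (List Bool)).ncard :=
              Set.ncard_le_ncard hsub (by simp)
          _ ≤ 2 := by
              apply le_trans (Set.ncard_insert_le _ _)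
              simp

lemma main_aux : ∀ (y x : List Bool), x.length = y.length + 1 → ¬ y.Sublist x →
    {z : List Bool | z.Sublist x ∧ z.Sublist y ∧ z.length + 1 = y.length}.ncard ≤ 3 := by
  intro y
  induction y with
  | nil => intro x _ hs; exact absurd (List.nil_sublist x) hs
  | cons b y' IH =>
    intro x h hs
    match x with
    | [] => simp at h
    | c :: x' =>
      simp only [List.length_cons, Nat.add_right_cancel_iff] at h
      by_cases hcb : c = b
      · subst hcb
        have hs' : ¬ y'.Sublist x' := fun hh => hs (List.cons_sublist_cons.mpr hh)
        have hkey : {z : List Bool | z.Sublist (c::x') ∧ z.Sublist (c::y') ∧ z.length + 1 = (c::y').length}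
            = (List.cons c) '' {z : List Bool | z.Sublist x' ∧ z.Sublist y' ∧ z.length + 1 = y'.length} := by
          ext z
          simp only [Set.mem_setOf_eq, Set.mem_image, List.length_cons]
          constructor
          · rintro ⟨h1, h2, h3⟩
            match z with
            | [] =>
              simp only [List.length_nil, List.length_cons] at h3
              have hy' : y' = [] := List.length_eq_zero_iff.mp (by omega)
              exact absurd (by rw [hy']; exact List.nil_sublist _) hs'
            | d :: z' =>
              by_cases hdc : d = c
              · subst hdc
                exact ⟨z', ⟨List.cons_sublist_cons.mp h1, List.cons_sublist_cons.mp h2,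
                  by simpa using h3⟩, rfl⟩
              · have e2 : d :: z' = y' :=
                  (cons_sublist_of_ne h2 hdc).eq_of_length (by simpa using h3)
                exact absurd (e2 ▸ cons_sublist_of_ne h1 hdc) hs'
          · rintro ⟨z', ⟨h1, h2, h3⟩, rfl⟩
            exact ⟨List.cons_sublist_cons.mpr h1, List.cons_sublist_cons.mpr h2, by simp [h3]⟩
        rw [hkey, Set.ncard_image_of_injective _ (fun s t hst => by injection hst)]
        exact IH x' h hs'
      · -- heads differ
        set B : Set (List Bool) :=
          {z : List Bool | z.Sublist x' ∧ z.Sublist (b::y') ∧ z.length + 1 = x'.length} with hB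
        have hxy : x' ≠ b :: y' := by
          intro hh
          exact hs (hh ▸ (List.sublist_cons_self c x'))
        have hBcard : B.ncard ≤ 2 := lev_two x' (b::y') hxy (by simp [h])
        have hsub : {z : List Bool | z.Sublist (c::x') ∧ z.Sublist (b::y') ∧ z.length + 1 = (b::y').length}
            ⊆ insert y' B := by
          rintro z ⟨h1, h2, h3⟩
          simp only [List.length_cons, Nat.add_right_cancel_iff] at h3
          match z with
          | [] =>
            right
            refine ⟨List.nil_sublist _, List.nil_sublist _, ?_⟩
            simp only [List.length_nil] at h3 ⊢
            omega
          | d :: z' =>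
            by_cases hdc : d = c
            · subst hdc
              left
              exact (cons_sublist_of_ne h2 hcb).eq_of_length h3
            · right
              exact ⟨cons_sublist_of_ne h1 hdc, h2, by omega⟩
        calc _ ≤ (insert y' B).ncard :=
              Set.ncard_le_ncard hsub
                (Set.Finite.insert _ ((finite_sub x').subset (fun z hz => hz.1)))
          _ ≤ B.ncard + 1 := Set.ncard_insert_le _ _
          _ ≤ 3 := by omega

/-- If `x` is one longer than `y` and `y` is not obtained from `x` by one deletion,
then the intersection of `D_2(x)` and `D_1(y)` has size at most `3`. -/
theorem stmt8 (x y : List Bool) (h : x.length = y.length + 1)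
    (hy : y ∉ delBall 1 x) :
    (delBall 2 x ∩ delBall 1 y).ncard ≤ 3 := by
  have hs : ¬ y.Sublist x := fun hh => hy ⟨hh, by omega⟩
  have hset : delBall 2 x ∩ delBall 1 y
      = {z : List Bool | z.Sublist x ∧ z.Sublist y ∧ z.length + 1 = y.length} := by
    ext z
    simp only [delBall, Set.mem_inter_iff, Set.mem_setOf_eq]
    constructor
    · rintro ⟨⟨h1, h2⟩, ⟨h3, h4⟩⟩; exact ⟨h1, h3, h4⟩
    · rintro ⟨h1, h2, h3⟩; exact ⟨⟨h1, by omega⟩, h2, h3⟩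
  rw [hset]
  exact main_aux y x h hs
end

section
/- Let x, y be binary sequences with |x| = |y| + 1 = m + 1 and y ∉ D_1(x), where m ≥ 4. Then |D_3(x) ∩ D_2(y)| ≤ 3m − 8. -/
/-- Common subsequences of `x` and `y` of length `k`. -/
def CS (x y : List Bool) (k : ℕ) : Set (List Bool) :=
  {z | z.Sublist x ∧ z.Sublist y ∧ z.length = k}

/-- Those `w` such that `c :: w` is a common subsequence of length `k+1`. -/
def HS (c : Bool) (x y : List Bool) (k : ℕ) : Set (List Bool) :=
  {w | (c :: w).Sublist x ∧ (c :: w).Sublist y ∧ w.length = k}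

lemma finite_of_sublist {x : List Bool} {S : Set (List Bool)}
    (h : ∀ z ∈ S, z.Sublist x) : S.Finite := by
  apply Set.Finite.subset (x.sublists.toFinset.finite_toSet)
  intro z hz
  simp [List.mem_sublists]
  exact h z hz

lemma CS_finite (x y : List Bool) (k : ℕ) : (CS x y k).Finite :=
  finite_of_sublist (fun z hz => hz.1)

lemma HS_finite (c : Bool) (x y : List Bool) (k : ℕ) : (HS c x y k).Finite :=
  finite_of_sublist (fun w hw => ((List.sublist_cons_self c w).trans hw.1))

lemma sublist_of_ne {c b : Bool} {w y : List Bool} (h : (c :: w).Sublist (b :: y))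
    (hne : c ≠ b) : (c :: w).Sublist y := by
  cases h with
  | cons _ h => exact h
  | cons_cons => exact absurd rfl hne

lemma split (x y : List Bool) (k : ℕ) :
    (CS x y (k+1)).ncard ≤ (HS true x y k).ncard + (HS false x y k).ncard := by
  have hsub : CS x y (k+1) ⊆ (List.cons true '' HS true x y k) ∪
      (List.cons false '' HS false x y k) := by
    rintro z ⟨hzx, hzy, hzl⟩
    match z, hzl with
    | c :: w, hzl =>
      cases c
      · exact Or.inr ⟨w, ⟨hzx, hzy, by simpa using hzl⟩, rfl⟩
      · exact Or.inl ⟨w, ⟨hzx, hzy, by simpa using hzl⟩, rfl⟩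
  calc (CS x y (k+1)).ncard
      ≤ ((List.cons true '' HS true x y k) ∪ (List.cons false '' HS false x y k)).ncard :=
        Set.ncard_le_ncard hsub
          (Set.Finite.union ((HS_finite _ _ _ _).image _) ((HS_finite _ _ _ _).image _))
    _ ≤ (List.cons true '' HS true x y k).ncard + (List.cons false '' HS false x y k).ncard :=
        Set.ncard_union_le _ _
    _ ≤ _ :=
        Nat.add_le_add (Set.ncard_image_le (HS_finite _ _ _ _))
          (Set.ncard_image_le (HS_finite _ _ _ _))

/-- Bound an `HS` by a common-subsequence set at the `cons` level. -/
lemma HS_le_of_cons_mem {c : Bool} {x y : List Bool} {k : ℕ} {S : Set (List Bool)}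
    (hS : S.Finite) (h : ∀ w ∈ HS c x y k, (c :: w) ∈ S) :
    (HS c x y k).ncard ≤ S.ncard := by
  rw [← Set.ncard_image_of_injective (HS c x y k) (List.cons_injective (a := c))]
  apply Set.ncard_le_ncard _ hS
  rintro z ⟨w, hw, rfl⟩
  exact h w hw

lemma ncard_le_one_of_subset_singleton {S : Set (List Bool)} {v : List Bool}
    (h : S ⊆ {v}) : S.ncard ≤ 1 :=
  (Set.ncard_le_ncard h (Set.finite_singleton v)).trans_eq (Set.ncard_singleton v)

lemma exists_eraseIdx {z u : List Bool} (h : z.Sublist u) :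
    z.length + 1 = u.length → ∃ i < u.length, z = u.eraseIdx i := by
  induction h with
  | slnil => intro h; simp at h
  | cons b h ih =>
    intro hl
    refine ⟨0, by simp, ?_⟩
    simp only [List.eraseIdx_cons_zero]
    exact h.eq_of_length (by simpa using hl)
  | cons_cons b h ih =>
    intro hl
    simp at hl
    obtain ⟨i, hi, hz⟩ := ih hl
    exact ⟨i + 1, by simpa using hi, by simp [hz]⟩

/-- Any set of sublists of `u` of length `|u| - 1` has at most `|u|` elements. -/
lemma ncard_le_length {u : List Bool} {S : Set (List Bool)}
    (h : ∀ z ∈ S, z.Sublist u ∧ z.length + 1 = u.length) : S.ncard ≤ u.length := by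
  have hsub : S ⊆ (fun i => u.eraseIdx i) '' ↑(Finset.range u.length) := by
    intro z hz
    obtain ⟨i, hi, hz'⟩ := exists_eraseIdx (h z hz).1 (h z hz).2
    exact ⟨i, by simpa using hi, hz'.symm⟩
  calc S.ncard ≤ _ := Set.ncard_le_ncard hsub (((Finset.range u.length).finite_toSet).image _)
    _ ≤ (↑(Finset.range u.length) : Set ℕ).ncard :=
        Set.ncard_image_le (Finset.range u.length).finite_toSet
    _ = u.length := by rw [Set.ncard_coe_finset, Finset.card_range]

lemma ncard_le_length' {c : Bool} {u : List Bool} {S : Set (List Bool)}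
    (h : ∀ w ∈ S, (c :: w).Sublist u ∧ w.length + 2 = u.length) : S.ncard ≤ u.length := by
  rw [← Set.ncard_image_of_injective S (List.cons_injective (a := c))]
  apply ncard_le_length
  rintro z ⟨w, hw, rfl⟩
  exact ⟨(h w hw).1, by have := (h w hw).2; simpa using this⟩

lemma CS_zero (x y : List Bool) : (CS x y 0).ncard ≤ 1 := by
  apply ncard_le_one_of_subset_singleton (v := [])
  rintro z ⟨-, -, hl⟩
  simpa [List.length_eq_zero_iff] using hl

lemma CS_one (x y : List Bool) : (CS x y 1).ncard ≤ 2 := by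
  have h : CS x y 1 ⊆ {[true], [false]} := by
    rintro z ⟨-, -, hl⟩
    match z, hl with
    | [c], _ => cases c <;> simp
  calc (CS x y 1).ncard ≤ ({[true], [false]} : Set (List Bool)).ncard :=
        Set.ncard_le_ncard h (Set.Finite.insert _ (Set.finite_singleton _))
    _ ≤ 2 := (Set.ncard_insert_le _ _).trans (by simp)

/-- Levenshtein: two distinct equal-length words share at most 2 subwords
one letter shorter. -/
lemma lemL1 (k : ℕ) : ∀ x y : List Bool, x.length = k + 1 → y.length = k + 1 →
    x ≠ y → (CS x y k).ncard ≤ 2 := by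
  induction k with
  | zero => intro x y _ _ _; exact (CS_zero x y).trans (by norm_num)
  | succ k ih =>
    intro x y hx hy hne
    match x, y with
    | a :: x', b :: y' =>
      simp at hx hy
      refine (split _ _ k).trans ?_
      by_cases hab : a = b
      · subst hab
        -- head = a : recurse; head ≠ a : empty
        have h1 : (HS a (a::x') (a::y') k).ncard ≤ 2 := by
          refine (Set.ncard_le_ncard ?_ (CS_finite x' y' k)).trans (ih x' y' hx hy ?_)
          · rintro w ⟨hwx, hwy, hwl⟩
            exact ⟨(List.cons_sublist_cons.mp hwx), (List.cons_sublist_cons.mp hwy), hwl⟩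
          · rintro rfl; exact hne rfl
        have h2 : (HS (!a) (a::x') (a::y') k).ncard = 0 := by
          rw [Set.ncard_eq_zero (HS_finite _ _ _ _)]
          ext w
          simp only [Set.mem_empty_iff_false, iff_false]
          rintro ⟨hwx, hwy, hwl⟩
          have hwx' := sublist_of_ne hwx (by simp)
          have hwy' := sublist_of_ne hwy (by simp)
          have : (!a) :: w = x' := hwx'.eq_of_length (by simp [hwl, hx])
          have h2 : (!a) :: w = y' := hwy'.eq_of_length (by simp [hwl, hy])
          exact hne (by rw [this.symm.trans h2])
        cases a <;> simp only [Bool.not_false, Bool.not_true] at h2 <;> omega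
      · -- different heads: each HS has at most one element
        have key : ∀ c : Bool, (HS c (a::x') (b::y') k).ncard ≤ 1 := by
          intro c
          by_cases hc : c = b
          · subst hc
            apply ncard_le_one_of_subset_singleton (v := x'.tail)
            rintro w ⟨hwx, hwy, hwl⟩
            have hwx' := sublist_of_ne hwx (fun h => hab h.symm)
            have : c :: w = x' := hwx'.eq_of_length (by simp [hwl, hx])
            simp [← this]
          · have hcb : c = a := by
              cases c <;> cases a <;> cases b <;> simp_all
            subst hcb
            apply ncard_le_one_of_subset_singleton (v := y'.tail)
            rintro w ⟨hwx, hwy, hwl⟩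
            have hwy' := sublist_of_ne hwy hab
            have : c :: w = y' := hwy'.eq_of_length (by simp [hwl, hy])
            simp [← this]
        have := key true; have := key false; omega

/-- Two distinct equal-length words of length `k+2` share at most `2k` subwords
of length `k`. -/
lemma lemE (k : ℕ) (hk : 1 ≤ k) : ∀ x y : List Bool, x.length = k + 2 →
    y.length = k + 2 → x ≠ y → (CS x y k).ncard ≤ 2 * k := by
  induction k, hk using Nat.le_induction with
  | base => intro x y _ _ _; exact (CS_one x y).trans (by norm_num)
  | succ k hk ih =>
    intro x y hx hy hne
    match x, y with
    | a :: x', b :: y' =>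
      simp at hx hy
      refine (split _ _ k).trans ?_
      by_cases hab : a = b
      · subst hab
        have hne' : x' ≠ y' := by rintro rfl; exact hne rfl
        have h1 : (HS a (a::x') (a::y') k).ncard ≤ 2 * k := by
          refine (Set.ncard_le_ncard ?_ (CS_finite x' y' k)).trans (ih x' y' hx hy hne')
          rintro w ⟨hwx, hwy, hwl⟩
          exact ⟨List.cons_sublist_cons.mp hwx, List.cons_sublist_cons.mp hwy, hwl⟩
        have h2 : (HS (!a) (a::x') (a::y') k).ncard ≤ 2 := by
          refine (HS_le_of_cons_mem (CS_finite x' y' (k+1)) ?_).trans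
            (lemL1 (k+1) x' y' (by omega) (by omega) hne')
          rintro w ⟨hwx, hwy, hwl⟩
          exact ⟨sublist_of_ne hwx (by simp), sublist_of_ne hwy (by simp), by simp [hwl]⟩
        cases a <;> simp only [Bool.not_false, Bool.not_true] at h2 <;> omega
      · -- different heads
        have hB : (HS b (a::x') (b::y') k).ncard ≤ k + 1 := by
          match x', hx with
          | c :: x₂, hx =>
            simp at hx
            by_cases hcb : c = b
            · subst hcb
              refine le_trans (ncard_le_length (u := x₂) ?_) (by omega)
              rintro w ⟨hwx, hwy, hwl⟩
              have h1 : (c :: w).Sublist (c :: x₂) := sublist_of_ne hwx (fun h => hab h.symm)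
              exact ⟨List.cons_sublist_cons.mp h1, by omega⟩
            · refine le_trans (ncard_le_one_of_subset_singleton (v := x₂.tail) ?_) (by omega)
              rintro w ⟨hwx, hwy, hwl⟩
              have h1 : (b :: w).Sublist (c :: x₂) := sublist_of_ne hwx (fun h => hab h.symm)
              have h2 : (b :: w).Sublist x₂ := sublist_of_ne h1 (fun h => hcb h.symm)
              have : b :: w = x₂ := h2.eq_of_length (by simp [hwl]; omega)
              simp [← this]
        have hA : (HS a (a::x') (b::y') k).ncard ≤ k + 1 := by
          match y', hy with
          | c :: y₂, hy =>
            simp at hy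
            by_cases hca : c = a
            · subst hca
              refine le_trans (ncard_le_length (u := y₂) ?_) (by omega)
              rintro w ⟨hwx, hwy, hwl⟩
              have h1 : (c :: w).Sublist (c :: y₂) := sublist_of_ne hwy hab
              exact ⟨List.cons_sublist_cons.mp h1, by omega⟩
            · refine le_trans (ncard_le_one_of_subset_singleton (v := y₂.tail) ?_) (by omega)
              rintro w ⟨hwx, hwy, hwl⟩
              have h1 : (a :: w).Sublist (c :: y₂) := sublist_of_ne hwy hab
              have h2 : (a :: w).Sublist y₂ := sublist_of_ne h1 (fun h => hca h.symm)
              have : a :: w = y₂ := h2.eq_of_length (by simp [hwl]; omega)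
              simp [← this]
        cases a <;> cases b <;> simp_all <;> omega

/-- If `|x| = |y| + 1` and `y` is not a subword of `x`, then `x` and `y` share
at most 3 common subwords of length `|y| - 1`. -/
lemma lemB (k : ℕ) : ∀ x y : List Bool, x.length = k + 2 → y.length = k + 1 →
    ¬y.Sublist x → (CS x y k).ncard ≤ 3 := by
  induction k with
  | zero => intro x y _ _ _; exact (CS_zero x y).trans (by norm_num)
  | succ k ih =>
    intro x y hx hy hysub
    match x, y with
    | a :: x', b :: y' =>
      simp at hx hy
      refine (split _ _ k).trans ?_
      by_cases hab : a = b
      · subst hab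
        have hy' : ¬y'.Sublist x' := fun h => hysub (List.cons_sublist_cons.mpr h)
        have h1 : (HS a (a::x') (a::y') k).ncard ≤ 3 := by
          refine (Set.ncard_le_ncard ?_ (CS_finite x' y' k)).trans (ih x' y' hx hy hy')
          rintro w ⟨hwx, hwy, hwl⟩
          exact ⟨List.cons_sublist_cons.mp hwx, List.cons_sublist_cons.mp hwy, hwl⟩
        have h2 : (HS (!a) (a::x') (a::y') k).ncard ≤ 0 := by
          refine le_trans (Set.ncard_le_ncard ?_ Set.finite_empty) (by simp)
          rintro w ⟨hwx, hwy, hwl⟩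
          have hwy' := sublist_of_ne hwy (by simp)
          have : (!a) :: w = y' := hwy'.eq_of_length (by simp [hwl, hy])
          exact hy' (this ▸ sublist_of_ne hwx (by simp))
        cases a <;> simp only [Bool.not_false, Bool.not_true] at h2 <;> omega
      · have hA : (HS a (a::x') (b::y') k).ncard ≤ 1 := by
          apply ncard_le_one_of_subset_singleton (v := y'.tail)
          rintro w ⟨hwx, hwy, hwl⟩
          have h1 := sublist_of_ne hwy hab
          have : a :: w = y' := h1.eq_of_length (by simp [hwl, hy])
          simp [← this]
        have hB : (HS b (a::x') (b::y') k).ncard ≤ 2 := by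
          have hxy : x' ≠ b :: y' := by
            rintro rfl
            exact hysub (List.sublist_cons_self _ _)
          refine (HS_le_of_cons_mem (CS_finite x' (b::y') (k+1)) ?_).trans
            (lemL1 (k+1) x' (b::y') (by omega) (by simp; omega) hxy)
          rintro w ⟨hwx, hwy, hwl⟩
          exact ⟨sublist_of_ne hwx (fun h => hab h.symm), hwy, by simp [hwl]⟩
        cases a <;> cases b <;> simp_all <;> omega

/-- All binary lists of length `n`. -/
def allB : ℕ → List (List Bool)
  | 0 => [[]]
  | n+1 => (allB n).flatMap (fun t => [true :: t, false :: t])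

lemma mem_allB : ∀ (n : ℕ) (x : List Bool), x.length = n → x ∈ allB n := by
  intro n
  induction n with
  | zero => intro x hx; simp [List.length_eq_zero_iff] at hx; simp [hx, allB]
  | succ n ih =>
    intro x hx
    match x with
    | c :: t =>
      simp at hx
      simp only [allB, List.mem_flatMap]
      exact ⟨t, ih t hx, by cases c <;> simp⟩

lemma CS_eq_finset (x y : List Bool) (k : ℕ) :
    CS x y k = ↑((x.sublists.filter
      (fun z => decide (z.Sublist y) && (z.length == k))).toFinset) := by
  ext z
  simp [CS, List.mem_filter, List.mem_sublists, and_assoc]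

lemma base_check : ∀ x ∈ allB 5, ∀ y ∈ allB 4, ¬y.Sublist x →
    ((x.sublists.filter
      (fun z => decide (z.Sublist y) && (z.length == 2))).toFinset).card ≤ 4 := by
  decide

lemma lemA_base (x y : List Bool) (hx : x.length = 5) (hy : y.length = 4)
    (hysub : ¬y.Sublist x) : (CS x y 2).ncard ≤ 4 := by
  rw [CS_eq_finset, Set.ncard_coe_finset]
  exact base_check x (mem_allB 5 x hx) y (mem_allB 4 y hy) hysub

/-- Main lemma: if `|x| = k + 3`, `|y| = k + 2`, `y` not a subword of `x`,
then `x,y` share at most `3k - 2` common subwords of length `k`. -/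
lemma lemA (k : ℕ) (hk : 2 ≤ k) : ∀ x y : List Bool, x.length = k + 3 →
    y.length = k + 2 → ¬y.Sublist x → (CS x y k).ncard ≤ 3 * k - 2 := by
  induction k, hk using Nat.le_induction with
  | base => intro x y hx hy hysub; exact (lemA_base x y hx hy hysub).trans (by norm_num)
  | succ k hk ih =>
    intro x y hx hy hysub
    match x, y with
    | a :: x', b :: y' =>
      simp at hx hy
      refine (split _ _ k).trans ?_
      by_cases hab : a = b
      · subst hab
        have hy' : ¬y'.Sublist x' := fun h => hysub (List.cons_sublist_cons.mpr h)
        have h1 : (HS a (a::x') (a::y') k).ncard ≤ 3 * k - 2 := by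
          refine (Set.ncard_le_ncard ?_ (CS_finite x' y' k)).trans (ih x' y' hx hy hy')
          rintro w ⟨hwx, hwy, hwl⟩
          exact ⟨List.cons_sublist_cons.mp hwx, List.cons_sublist_cons.mp hwy, hwl⟩
        have h2 : (HS (!a) (a::x') (a::y') k).ncard ≤ 3 := by
          refine (HS_le_of_cons_mem (CS_finite x' y' (k+1)) ?_).trans
            (lemB (k+1) x' y' (by omega) (by omega) hy')
          rintro w ⟨hwx, hwy, hwl⟩
          exact ⟨sublist_of_ne hwx (by simp), sublist_of_ne hwy (by simp), by simp [hwl]⟩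
        cases a <;> simp only [Bool.not_false, Bool.not_true] at h2 <;> omega
      · -- different heads
        have hA : (HS a (a::x') (b::y') k).ncard ≤ k + 1 := by
          match y', hy with
          | c :: y₂, hy =>
            simp at hy
            by_cases hca : c = a
            · subst hca
              refine le_trans (ncard_le_length (u := y₂) ?_) (by omega)
              rintro w ⟨hwx, hwy, hwl⟩
              have h1 : (c :: w).Sublist (c :: y₂) := sublist_of_ne hwy hab
              exact ⟨List.cons_sublist_cons.mp h1, by omega⟩
            · refine le_trans (ncard_le_one_of_subset_singleton (v := y₂.tail) ?_) (by omega)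
              rintro w ⟨hwx, hwy, hwl⟩
              have h1 : (a :: w).Sublist (c :: y₂) := sublist_of_ne hwy hab
              have h2 : (a :: w).Sublist y₂ := sublist_of_ne h1 (fun h => hca h.symm)
              have : a :: w = y₂ := h2.eq_of_length (by simp [hwl]; omega)
              simp [← this]
        have hB : (HS b (a::x') (b::y') k).ncard ≤ 2 * k := by
          match x', hx with
          | c :: x₂, hx =>
            simp at hx
            by_cases hcb : c = b
            · subst hcb
              have hxy : x₂ ≠ y' := by
                rintro rfl
                exact hysub (List.sublist_cons_self _ _)
              refine le_trans (Set.ncard_le_ncard ?_ (CS_finite x₂ y' k))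
                (le_trans (lemE k (by omega) x₂ y' (by omega) (by omega) hxy) (by omega))
              rintro w ⟨hwx, hwy, hwl⟩
              have h1 : (c :: w).Sublist (c :: x₂) := sublist_of_ne hwx (fun h => hab h.symm)
              exact ⟨List.cons_sublist_cons.mp h1, List.cons_sublist_cons.mp hwy, hwl⟩
            · refine le_trans (ncard_le_length' (c := b) (u := x₂) ?_) (by omega)
              rintro w ⟨hwx, hwy, hwl⟩
              have h1 : (b :: w).Sublist (c :: x₂) := sublist_of_ne hwx (fun h => hab h.symm)
              have h2 : (b :: w).Sublist x₂ := sublist_of_ne h1 (fun h => hcb h.symm)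
              exact ⟨h2, by omega⟩
        cases a <;> cases b <;> simp_all <;> omega

/-- If `|x| = |y| + 1 = m + 1`, `y ∉ D_1(x)` and `m ≥ 4`, then
the intersection of `D_3(x)` and `D_2(y)` has size at most `3m - 8`. -/
theorem stmt9 (x y : List Bool) (m : ℕ) (hm : y.length = m) (h4 : 4 ≤ m)
    (h : x.length = y.length + 1) (hy : y ∉ delBall 1 x) :
    (delBall 3 x ∩ delBall 2 y).ncard ≤ 3 * m - 8 := by
  have hysub : ¬y.Sublist x := fun hs => hy ⟨hs, by omega⟩
  have heq : delBall 3 x ∩ delBall 2 y = CS x y (m - 2) := by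
    ext z
    simp only [delBall, CS, Set.mem_inter_iff, Set.mem_setOf_eq]
    constructor
    · rintro ⟨⟨h1, h2⟩, ⟨h3, h5⟩⟩
      exact ⟨h1, h3, by omega⟩
    · rintro ⟨h1, h3, h5⟩
      exact ⟨⟨h1, by omega⟩, ⟨h3, by omega⟩⟩
  rw [heq]
  have := lemA (m - 2) (by omega) x y (by omega) (by omega) hysub
  omega
end

section
/- Let x, y be binary sequences with |x| = |y| + 2 and y ∉ D_2(x). Then |D_3(x) ∩ D_1(y)| ≤ 4. -/
lemma finite_sub_s10 (y : List Bool) : {z : List Bool | z.Sublist y}.Finite := by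
  apply Set.Finite.subset (y.sublists.toFinset.finite_toSet)
  intro z hz
  simpa [List.mem_sublists] using hz

/-- Key lemma: if `y` is not a sublist of `x`, the number of common subsequences of
length `|y| - 1` is at most `|x| - |y| + 2`. -/
lemma key : ∀ (x : List Bool), ∀ (y : List Bool), ¬ y.Sublist x → y.length ≤ x.length →
    {z : List Bool | z.Sublist x ∧ z.Sublist y ∧ z.length + 1 = y.length}.ncard
      ≤ x.length - y.length + 2 := by
  intro x
  induction x with
  | nil =>
    intro y hns hlen
    have hy : y = [] := List.eq_nil_of_length_eq_zero (by simpa using hlen)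
    exact absurd (hy ▸ List.nil_sublist []) hns
  | cons a x' ih =>
    intro y hns hlen
    match y with
    | [] => exact absurd (List.nil_sublist _) hns
    | b :: y' =>
      have e1 : (a :: x').length = x'.length + 1 := by simp
      have e2 : (b :: y').length = y'.length + 1 := by simp
      by_cases hab : a = b
      · subst hab
        have hy' : ¬ y'.Sublist x' := fun hs => hns (List.cons_sublist_cons.mpr hs)
        have hfin' : {z : List Bool | z.Sublist x' ∧ z.Sublist y' ∧ z.length + 1 = y'.length}.Finite :=
          (finite_sub_s10 y').subset (fun z hz => hz.2.1)
        have hsub : {z : List Bool | z.Sublist (a::x') ∧ z.Sublist (a::y') ∧ z.length + 1 = (a::y').length}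
            ⊆ (List.cons a) '' {z : List Bool | z.Sublist x' ∧ z.Sublist y' ∧ z.length + 1 = y'.length} := by
          rintro z ⟨hzx, hzy, hzl⟩
          match z with
          | [] =>
            exfalso
            apply hy'
            have hy0 : y' = [] := List.eq_nil_of_length_eq_zero (by
              simp only [List.length_nil, List.length_cons] at hzl; omega)
            simp [hy0]
          | c :: w =>
            by_cases hca : c = a
            · subst hca
              refine ⟨w, ⟨List.cons_sublist_cons.mp hzx, List.cons_sublist_cons.mp hzy, ?_⟩, rfl⟩
              simp only [List.length_cons] at hzl ⊢; omega
            · exfalso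
              have hzy' : (c::w).Sublist y' := by
                cases hzy with
                | cons _ h => exact h
                | cons_cons _ h => exact absurd rfl hca
              have hzx' : (c::w).Sublist x' := by
                cases hzx with
                | cons _ h => exact h
                | cons_cons _ h => exact absurd rfl hca
              have hlen' : (c::w).length = y'.length := by
                simp only [List.length_cons] at hzl ⊢; omega
              have hzeq := hzy'.eq_of_length hlen'
              exact hy' (hzeq ▸ hzx')
        have h1 := Set.ncard_le_ncard hsub (hfin'.image _)
        have h2 := Set.ncard_image_le (f := List.cons a) hfin'
        have h3 := ih y' hy' (by simp only [List.length_cons] at hlen; omega)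
        omega
      · have hyx' : ¬ (b :: y').Sublist x' := fun hs => hns (hs.cons a)
        have hsub : {z : List Bool | z.Sublist (a::x') ∧ z.Sublist (b::y') ∧ z.length + 1 = (b::y').length}
            ⊆ insert y' {z : List Bool | z.Sublist x' ∧ z.Sublist (b::y') ∧ z.length + 1 = (b::y').length} := by
          rintro z ⟨hzx, hzy, hzl⟩
          match z with
          | [] => exact Or.inr ⟨List.nil_sublist _, hzy, hzl⟩
          | c :: w =>
            by_cases hca : c = a
            · have hcb : c ≠ b := fun hcb => hab (hca.symm.trans hcb)
              have hzy' : (c::w).Sublist y' := by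
                cases hzy with
                | cons _ h => exact h
                | cons_cons _ h => exact absurd rfl hcb
              have hlen' : (c::w).length = y'.length := by
                simp only [List.length_cons] at hzl ⊢; omega
              exact Or.inl (hzy'.eq_of_length hlen')
            · have hzx' : (c::w).Sublist x' := by
                cases hzx with
                | cons _ h => exact h
                | cons_cons _ h => exact absurd rfl hca
              exact Or.inr ⟨hzx', hzy, hzl⟩
        have hfin : {z : List Bool | z.Sublist x' ∧ z.Sublist (b::y') ∧ z.length + 1 = (b::y').length}.Finite :=
          (finite_sub_s10 (b::y')).subset (fun z hz => hz.2.1)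
        have h1 : {z : List Bool | z.Sublist (a::x') ∧ z.Sublist (b::y') ∧ z.length + 1 = (b::y').length}.ncard
            ≤ {z : List Bool | z.Sublist x' ∧ z.Sublist (b::y') ∧ z.length + 1 = (b::y').length}.ncard + 1 := by
          calc _ ≤ (insert y' {z : List Bool | z.Sublist x' ∧ z.Sublist (b::y') ∧ z.length + 1 = (b::y').length}).ncard :=
                Set.ncard_le_ncard hsub (hfin.insert _)
            _ ≤ _ := Set.ncard_insert_le _ _
        by_cases hd : (b :: y').length ≤ x'.length
        · have h3 := ih (b :: y') hyx' hd
          omega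
        · have hsub2 : {z : List Bool | z.Sublist x' ∧ z.Sublist (b::y') ∧ z.length + 1 = (b::y').length}
              ⊆ {x'} := by
            rintro z ⟨hzx, hzy, hzl⟩
            have hl : z.length = x'.length := by omega
            exact hzx.eq_of_length hl
          have h4 : {z : List Bool | z.Sublist x' ∧ z.Sublist (b::y') ∧ z.length + 1 = (b::y').length}.ncard ≤ 1 := by
            calc _ ≤ ({x'} : Set (List Bool)).ncard := Set.ncard_le_ncard hsub2 (Set.finite_singleton _)
              _ = 1 := Set.ncard_singleton _
          omega

/-- If `x` is two longer than `y` and `y` is not obtained from `x` by two deletions,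
then the intersection of `D_3(x)` and `D_1(y)` has size at most `4`. -/
theorem stmt10 (x y : List Bool) (h : x.length = y.length + 2)
    (hy : y ∉ delBall 2 x) :
    (delBall 3 x ∩ delBall 1 y).ncard ≤ 4 := by
  have hyx : ¬ y.Sublist x := fun hs => hy ⟨hs, by omega⟩
  have hset : delBall 3 x ∩ delBall 1 y
      = {z : List Bool | z.Sublist x ∧ z.Sublist y ∧ z.length + 1 = y.length} := by
    ext z
    simp only [delBall, Set.mem_inter_iff, Set.mem_setOf_eq]
    constructor
    · rintro ⟨⟨h1, h2⟩, h3, h4⟩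
      exact ⟨h1, h3, h4⟩
    · rintro ⟨h1, h2, h3⟩
      exact ⟨⟨h1, by omega⟩, h2, h3⟩
  rw [hset]
  have hk := key x y hyx (by omega)
  omega
end

section
/- Let x, y be binary sequences with |x| = |y| + 2 = m + 2 and y ∉ D_2(x), where m ≥ 5. Then |D_4(x) ∩ D_2(y)| ≤ 4m − 13. -/
open Set List
open scoped List

instance (r : ℕ) (x : List Bool) : Finite (delBall r x) :=
  (x.sublists.toFinset.finite_toSet.subset fun _ hz => by simpa using hz.1).to_subtype

theorem delBall_zero (x : List Bool) : delBall 0 x = {x} := by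
  ext z
  exact ⟨fun ⟨hs, hl⟩ => hs.eq_of_length_le hl.ge, fun hz => hz ▸ ⟨Sublist.refl z, rfl⟩⟩

theorem delBall_eq_coe_toFinset (r : ℕ) (x : List Bool) :
    delBall r x = ↑(x.sublists.filter (fun z => z.length + r = x.length)).toFinset := by
  ext z
  simp [delBall]

theorem ncard_inter_range_cons {α : Type*} (S : Set (List α)) (a : α) :
    (S ∩ range (cons a)).ncard = (cons a ⁻¹' S).ncard := by
  rw [← image_preimage_eq_inter_range, ncard_image_of_injective _ cons_injective]

theorem sublist_of_sublist_cons_of_notMem_range {α : Type*} {z x : List α} {c : α}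
    (h : z <+ c :: x) (hz : z ∉ range (cons c)) : z <+ x := by
  rcases sublist_cons_iff.mp h with h | ⟨t, rfl, -⟩
  · exact h
  · exact absurd ⟨t, rfl⟩ hz

theorem delBall_succ_cons_diff_subset (r : ℕ) (c : Bool) (x : List Bool) :
    delBall (r + 1) (c :: x) \ range (cons c) ⊆ delBall r x :=
  fun _ ⟨⟨hs, hl⟩, hz⟩ => ⟨sublist_of_sublist_cons_of_notMem_range hs hz, by simp at hl; omega⟩

theorem preimage_cons_delBall_cons (r : ℕ) (b : Bool) (x : List Bool) :
    cons b ⁻¹' delBall r (b :: x) = delBall r x := by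
  ext z
  simp only [delBall, mem_preimage, mem_ofPred_eq, cons_sublist_cons, length_cons]
  exact and_congr_right fun _ => by omega

theorem ncard_delBall_one_le : ∀ x : List Bool, (delBall 1 x).ncard ≤ x.length
  | [] => by simp [delBall]
  | c :: x => by
    rw [← ncard_inter_add_ncard_sdiff_eq_ncard _ (range (cons c)), ncard_inter_range_cons,
      preimage_cons_delBall_cons]
    have hdiff : (delBall 1 (c :: x) \ range (cons c)).ncard ≤ 1 := by
      simpa [delBall_zero] using ncard_le_ncard (delBall_succ_cons_diff_subset 0 c x)
    have := ncard_delBall_one_le x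
    simp only [length_cons]
    omega

theorem ncard_delBall_one_inter_range_cons_le (x : List Bool) (a : Bool) :
    (delBall 1 x ∩ range (cons a)).ncard ≤ x.length - 1 := by
  rw [ncard_inter_range_cons]
  rcases x with _ | ⟨c, x⟩
  · simp [delBall]
  by_cases hca : c = a
  · subst hca
    rw [preimage_cons_delBall_cons]
    exact ncard_delBall_one_le x
  rcases x with _ | ⟨d, x⟩
  · simp [delBall]
  have hsub : cons a ⁻¹' delBall 1 (c :: d :: x) ⊆ {x} := fun z hz => by
    have := delBall_succ_cons_diff_subset 0 c _ ⟨hz, by simpa using hca⟩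
    simp only [delBall_zero, mem_singleton_iff, cons.injEq] at this
    exact this.2
  exact (ncard_le_ncard hsub).trans (by simp)

def commonDel (r : ℕ) (x y : List Bool) : Set (List Bool) := {z | z <+ x} ∩ delBall r y

instance (r : ℕ) (x y : List Bool) : Finite (commonDel r x y) :=
  inferInstanceAs (Finite ↥({z | z <+ x} ∩ delBall r y))

section commonDel

variable {r : ℕ} {x y : List Bool} {b c : Bool}

theorem commonDel_zero_eq_empty (h : ¬ y <+ x) : commonDel 0 x y = ∅ := by
  rw [commonDel, delBall_zero, inter_singleton_eq_empty]
  exact h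

theorem commonDel_eq_empty (h : x.length + r < y.length) : commonDel r x y = ∅ :=
  eq_empty_of_forall_notMem fun _ ⟨hs, _, hl⟩ => by have := hs.length_le; omega

theorem ncard_commonDel_le_of_length_le (h : x.length + r ≤ y.length) :
    (commonDel r x y).ncard ≤ x.length + r + 1 - y.length := by
  rcases h.lt_or_eq with h | h
  · simp [commonDel_eq_empty h]
  · have hsub : commonDel r x y ⊆ {x} := by
      rintro z ⟨hs, _, hl⟩
      exact hs.eq_of_length_le (by omega)
    exact (ncard_le_ncard hsub).trans (by simp; omega)

theorem preimage_cons_commonDel_cons :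
    cons b ⁻¹' commonDel r (b :: x) (b :: y) = commonDel r x y := by
  rw [commonDel, preimage_inter, preimage_cons_delBall_cons]
  simp [commonDel]

theorem preimage_cons_commonDel_cons_of_ne (h : c ≠ b) :
    cons b ⁻¹' commonDel r (c :: x) y = cons b ⁻¹' commonDel r x y := by
  ext z
  simp [commonDel, sublist_cons_iff, Ne.symm h]

theorem commonDel_succ_cons_cons_diff_subset :
    commonDel (r + 1) (b :: x) (b :: y) \ range (cons b) ⊆ commonDel r x y :=
  fun _ ⟨⟨hx, hy⟩, hz⟩ =>
    ⟨sublist_of_sublist_cons_of_notMem_range hx hz, delBall_succ_cons_diff_subset r b y ⟨hy, hz⟩⟩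

theorem commonDel_succ_cons_diff_subset :
    commonDel (r + 1) x (b :: y) \ range (cons b) ⊆ delBall r y :=
  fun _ ⟨⟨_, hy⟩, hz⟩ => delBall_succ_cons_diff_subset r b y ⟨hy, hz⟩

theorem ncard_commonDel_one_le (hyx : ¬ y <+ x) :
    (commonDel 1 x y).ncard ≤ x.length + 2 - y.length := by
  induction x generalizing y with
  | nil =>
    obtain _ | ⟨b, y⟩ := y
    · exact absurd (nil_sublist _) hyx
    · exact ncard_commonDel_le_of_length_le (by simp)
  | cons c x ih =>
    by_cases hlen : (c :: x).length + 1 ≤ y.length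
    · exact ncard_commonDel_le_of_length_le hlen
    obtain _ | ⟨b, y⟩ := y
    · exact absurd (nil_sublist _) hyx
    rw [← ncard_inter_add_ncard_sdiff_eq_ncard _ (range (cons b)), ncard_inter_range_cons]
    by_cases hcb : c = b
    · subst hcb
      have hdiff : commonDel 1 (c :: x) (c :: y) \ range (cons c) = ∅ :=
        subset_empty_iff.mp (commonDel_succ_cons_cons_diff_subset.trans
          (commonDel_zero_eq_empty fun h => hyx (h.cons_cons c)).subset)
      rw [preimage_cons_commonDel_cons, hdiff, ncard_empty]
      simpa using ih fun h => hyx (h.cons_cons c)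
    · rw [preimage_cons_commonDel_cons_of_ne hcb, ← ncard_inter_range_cons]
      have hhead := (ncard_le_ncard (inter_subset_left (t := range (cons b)))).trans
        (ih fun h => hyx (h.cons c))
      have hdiff : (commonDel 1 (c :: x) (b :: y) \ range (cons b)).ncard ≤ 1 := by
        simpa [delBall_zero] using ncard_le_ncard (commonDel_succ_cons_diff_subset (r := 0))
      simp only [length_cons] at hhead hlen ⊢
      omega

end commonDel

section commonDelTwo

variable {x y : List Bool} {b : Bool}

theorem ncard_preimage_cons_commonDel_le {r B : ℕ} :
    ∀ {x : List Bool}, (∀ x', b :: x' <+ x → (commonDel r x' y).ncard ≤ B) →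
      (cons b ⁻¹' commonDel r x (b :: y)).ncard ≤ B
  | [], _ => by
    have : cons b ⁻¹' commonDel r [] (b :: y) = ∅ :=
      eq_empty_of_forall_notMem fun z hz => by simpa using hz.1
    simp [this]
  | c :: x, hB => by
    by_cases hcb : c = b
    · subst hcb
      rw [preimage_cons_commonDel_cons]
      exact hB x (Sublist.refl _)
    · rw [preimage_cons_commonDel_cons_of_ne hcb]
      exact ncard_preimage_cons_commonDel_le fun x' h => hB x' (h.cons c)

theorem ncard_commonDel_two_cons_cons_le (hyx : ¬ y <+ x) :
    (commonDel 2 (b :: x) (b :: y)).ncard ≤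
      (commonDel 2 x y).ncard + (x.length + 2 - y.length) := by
  rw [← ncard_inter_add_ncard_sdiff_eq_ncard _ (range (cons b)), ncard_inter_range_cons,
    preimage_cons_commonDel_cons]
  gcongr
  exact (ncard_le_ncard commonDel_succ_cons_cons_diff_subset).trans (ncard_commonDel_one_le hyx)

theorem commonDel_two_cons_diff_subset (hy : 2 ≤ y.length) :
    commonDel 2 x (b :: y) \ range (cons b) ⊆ delBall 1 y ∩ range (cons !b) := by
  intro z hz
  have hzy : z ∈ delBall 1 y := commonDel_succ_cons_diff_subset hz
  refine ⟨hzy, ?_⟩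
  obtain _ | ⟨a, t⟩ := z
  · simp [delBall] at hzy; omega
  · have hab : a ≠ b := fun h => hz.2 ⟨t, h ▸ rfl⟩
    exact ⟨t, by cases a <;> cases b <;> simp_all⟩

theorem ncard_commonDel_two_le_of_forall {B : ℕ} (hy : 2 ≤ y.length)
    (hB : ∀ x', b :: x' <+ x → (commonDel 2 x' y).ncard ≤ B) :
    (commonDel 2 x (b :: y)).ncard ≤ B + (y.length - 1) := by
  rw [← ncard_inter_add_ncard_sdiff_eq_ncard _ (range (cons b)), ncard_inter_range_cons]
  gcongr
  · exact ncard_preimage_cons_commonDel_le hB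
  · exact (ncard_le_ncard (commonDel_two_cons_diff_subset hy)).trans
      (ncard_delBall_one_inter_range_cons_le y !b)

end commonDelTwo

theorem delBall_inter_delBall_eq_commonDel {r s : ℕ} {x y : List Bool}
    (h : y.length + s = x.length + r) : delBall s x ∩ delBall r y = commonDel r x y := by
  ext z
  simp only [commonDel, delBall, mem_inter_iff, mem_ofPred_eq]
  constructor
  · rintro ⟨⟨hx, -⟩, hy⟩
    exact ⟨hx, hy⟩
  · rintro ⟨hx, hy, hl⟩
    exact ⟨⟨hx, by omega⟩, hy, hl⟩

theorem ncard_delBall_two_le_four {y : List Bool} (hy : y.length = 4) :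
    (delBall 2 y).ncard ≤ 4 := by
  obtain ⟨b₁, b₂, b₃, b₄, rfl⟩ := length_eq_four.mp hy
  rw [delBall_eq_coe_toFinset, ncard_coe_finset]
  revert b₁ b₂ b₃ b₄
  decide

theorem ncard_delBall_two_le_seven {y : List Bool} (hy : y.length = 5) :
    (delBall 2 y).ncard ≤ 7 := by
  obtain _ | ⟨b₁, _ | ⟨b₂, _ | ⟨b₃, _ | ⟨b₄, _ | ⟨b₅, _ | ⟨_, _⟩⟩⟩⟩⟩⟩ := y <;> simp at hy
  rw [delBall_eq_coe_toFinset, ncard_coe_finset]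
  revert b₁ b₂ b₃ b₄ b₅
  decide

def commonDelBound (k q : ℕ) : ℕ := k * q + 1 - k * (k + 3) / 2

section commonDelBound

variable {k q : ℕ}

theorem commonDelBound_succ_right (hk : k ≤ 4) (hq : 4 ≤ q) :
    commonDelBound k (q + 1) = commonDelBound k q + k := by
  interval_cases k <;> simp only [commonDelBound] <;> omega

theorem commonDelBound_succ_succ (hk : k ≤ 3) (hq : 4 ≤ q) :
    commonDelBound (k + 1) (q + 1) = commonDelBound k q + (q - 1) := by
  interval_cases k <;> simp only [commonDelBound] <;> omega

theorem ncard_commonDel_two_le_commonDelBound_of_le_one {x y : List Bool} (hk : k ≤ 1)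
    (hkq : k < q) (hy : y.length = q) (hx : x.length + 2 ≤ q + k) :
    (commonDel 2 x y).ncard ≤ commonDelBound k q := by
  rcases le_or_gt (x.length + 2) q with hle | hlt
  · have := ncard_commonDel_le_of_length_le (r := 2) (x := x) (y := y) (by omega)
    have : 1 ≤ commonDelBound k q := by
      interval_cases k <;> simp only [commonDelBound] <;> omega
    omega
  · have hsub : commonDel 2 x y ⊆ delBall 1 x := by
      rintro z ⟨hzx, -, hl⟩
      exact ⟨hzx, by omega⟩
    have := (ncard_le_ncard hsub).trans (ncard_delBall_one_le x)
    have : commonDelBound k q = q - 1 := by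
      interval_cases k <;> simp only [commonDelBound] <;> omega
    omega

theorem ncard_commonDel_two_le_commonDelBound (hq : 4 ≤ q) (hk : k ≤ 4) (hkq : k < q)
    {x y : List Bool} (hy : y.length = q) (hx : x.length + 2 ≤ q + k) (hyx : ¬ y <+ x) :
    (commonDel 2 x y).ncard ≤ commonDelBound k q := by
  induction q, hq using Nat.le_induction generalizing k x y with
  | base =>
    rcases le_or_gt k 1 with hk1 | hk1
    · exact ncard_commonDel_two_le_commonDelBound_of_le_one hk1 hkq hy hx
    calc (commonDel 2 x y).ncard ≤ (delBall 2 y).ncard := ncard_le_ncard inter_subset_right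
      _ ≤ 4 := ncard_delBall_two_le_four hy
      _ ≤ commonDelBound k 4 := by interval_cases k <;> simp [commonDelBound]
  | succ q hq ih =>
    rcases le_or_gt k 1 with hk1 | hk1
    · exact ncard_commonDel_two_le_commonDelBound_of_le_one hk1 hkq hy hx
    by_cases hkq' : k = q
    · obtain rfl : k = 4 := by omega
      obtain rfl : q = 4 := by omega
      calc (commonDel 2 x y).ncard ≤ (delBall 2 y).ncard := ncard_le_ncard inter_subset_right
        _ ≤ 7 := ncard_delBall_two_le_seven hy
        _ = commonDelBound 4 5 := rfl
    obtain _ | ⟨b, y⟩ := y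
    · simp at hy
    obtain _ | ⟨c, x⟩ := x
    · simp only [length_cons] at hy
      exact (ncard_commonDel_le_of_length_le (by simp; omega)).trans (by simp; omega)
    simp only [length_cons, Nat.add_right_cancel_iff] at hy hx
    by_cases hcb : c = b
    · subst hcb
      have hyx' : ¬ y <+ x := fun h => hyx (h.cons_cons c)
      calc (commonDel 2 (c :: x) (c :: y)).ncard
          ≤ (commonDel 2 x y).ncard + (x.length + 2 - y.length) :=
            ncard_commonDel_two_cons_cons_le hyx'
        _ ≤ commonDelBound k q + k := add_le_add (ih hk (by omega) hy (by omega) hyx') (by omega)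
        _ = commonDelBound k (q + 1) := (commonDelBound_succ_right hk hq).symm
    · obtain ⟨j, rfl⟩ : ∃ j, k = j + 1 := ⟨k - 1, by omega⟩
      calc (commonDel 2 (c :: x) (b :: y)).ncard ≤ commonDelBound j q + (y.length - 1) := by
            refine ncard_commonDel_two_le_of_forall (by omega) fun x' hx' => ?_
            have hx'x : b :: x' <+ x := sublist_of_sublist_cons_of_notMem_range hx' (by simpa)
            exact ih (by omega) (by omega) hy (by have := hx'x.length_le; simp at this; omega)
              fun h => hyx ((h.cons_cons b).trans (hx'x.cons c))
        _ = commonDelBound (j + 1) (q + 1) := by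
            rw [hy, commonDelBound_succ_succ (by omega) hq]

end commonDelBound

/-- If `|x| = |y| + 2 = m + 2`, `y ∉ D_2(x)` and `m ≥ 5`, then
the intersection of `D_4(x)` and `D_2(y)` has size at most `4m - 13`. -/
theorem stmt11 (x y : List Bool) (m : ℕ) (hm : y.length = m) (h5 : 5 ≤ m)
    (h : x.length = y.length + 2) (hy : y ∉ delBall 2 x) :
    (delBall 4 x ∩ delBall 2 y).ncard ≤ 4 * m - 13 := by
  have hyx : ¬ y <+ x := fun hs => hy ⟨hs, by omega⟩
  rw [delBall_inter_delBall_eq_commonDel (by omega)]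
  have := ncard_commonDel_two_le_commonDelBound (k := 4) (by omega) le_rfl (by omega) hm
    (by omega) hyx
  simp only [commonDelBound] at this
  omega
end

section
/- For an alternating binary sequence a of length l ≥ 2 and its bitwise complement ā, |D_1(a) ∩ D_1(ā)| = 2, and for l ≥ 2, |D_2(a) ∩ D_2(ā)| = 2(l − 2) when l ≥ 3 (and the intersection has exactly the two alternating length-(l-1) sequences when considering one deletion). -/
/-! ### Auxiliary definitions -/

/-- alternating sequence of length n starting with b -/
def alt : Bool → ℕ → List Bool
  | _, 0 => []
  | b, n+1 => b :: alt (!b) n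

/-- number of equal adjacent pairs -/
def ec : List Bool → ℕ
  | [] => 0
  | [_] => 0
  | x :: y :: t => (if x = y then 1 else 0) + ec (y :: t)

/-- cost of embedding into an alternating sequence starting with b -/
def cst : Bool → List Bool → ℕ
  | _, [] => 0
  | b, x :: t => (if x = b then 1 else 2) + cst (!x) t

/-- position of first double (length if none) -/
def dp : List Bool → ℕ
  | [] => 0
  | x :: t => if t.head? = some x then 1 else 1 + dp t

def altbit (b : Bool) (k : ℕ) : Bool := xor b (decide (k % 2 = 1))

/-- length-`m` sequence starting with `b`, alternating except a double at
position `j` (purely alternating if `j = m`). -/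
def dd (b : Bool) (j m : ℕ) : List Bool := alt b j ++ alt (altbit b (j-1)) (m - j)

@[simp] lemma alt_length (b : Bool) (n : ℕ) : (alt b n).length = n := by
  induction n generalizing b with
  | zero => rfl
  | succ n ih => simp [alt, ih]

lemma compl'_alt (b : Bool) (n : ℕ) : compl' (alt b n) = alt (!b) n := by
  induction n generalizing b with
  | zero => rfl
  | succ n ih =>
    show (alt b (n+1)).map _ = _
    rw [show alt b (n+1) = b :: alt (!b) n from rfl, List.map_cons]
    rw [show alt (!b) (n+1) = (!b) :: alt (!(!b)) n from rfl]
    exact congrArg _ (ih (!b))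

lemma ec_cons (x : Bool) (t : List Bool) :
    ec (x :: t) = (if t.head? = some x then 1 else 0) + ec t := by
  cases t with
  | nil => simp [ec]
  | cons y s => simp [ec, eq_comm]

lemma sublist_alt_iff (z : List Bool) (b : Bool) (n : ℕ) :
    z.Sublist (alt b n) ↔ cst b z ≤ n := by
  induction n generalizing z b with
  | zero =>
    cases z with
    | nil => simp [alt, cst]
    | cons x t =>
      simp only [alt, List.sublist_nil, cst]
      constructor
      · intro h; exact absurd h (by simp)
      · intro h; exfalso; by_cases hxb : x = b <;> simp [hxb] at h
  | succ n ih =>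
    cases z with
    | nil => simp [cst, List.nil_sublist]
    | cons x t =>
      by_cases hxb : x = b
      · subst hxb
        have key : (x::t).Sublist (alt x (n+1)) ↔ t.Sublist (alt (!x) n) := by
          rw [show alt x (n+1) = x :: alt (!x) n from rfl]
          constructor
          · intro h
            rcases List.sublist_cons_iff.mp h with h | ⟨r, hr, hrs⟩
            · exact List.sublist_of_cons_sublist h
            · injection hr with _ h2; exact h2 ▸ hrs
          · intro h; exact h.cons₂ _
        rw [key, ih]
        have hc : cst x (x :: t) = 1 + cst (!x) t := by simp [cst]
        rw [hc]; omega
      · have hx : x = !b := by cases x <;> cases b <;> simp_all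
        have key : (x::t).Sublist (alt b (n+1)) ↔ (x::t).Sublist (alt (!b) n) := by
          rw [show alt b (n+1) = b :: alt (!b) n from rfl]
          constructor
          · intro h
            rcases List.sublist_cons_iff.mp h with h | ⟨r, hr, hrs⟩
            · exact h
            · exfalso; injection hr with h1 _; exact hxb h1
          · intro h; exact h.cons _
        rw [key, ih]
        subst hx
        have h1 : cst (!b) ((!b) :: t) = 1 + cst b t := by simp [cst]
        have h2 : cst b ((!b) :: t) = 2 + cst b t := by
          have : ¬ ((!b) = b) := by cases b <;> simp
          simp [cst, this]
        rw [h1, h2]; omega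

lemma cst_cons (b x : Bool) (t : List Bool) :
    cst b (x :: t) = t.length + 1 + ec (x :: t) + (if x = b then 0 else 1) := by
  induction t generalizing b x with
  | nil => by_cases hxb : x = b <;> simp [cst, ec, hxb]
  | cons y s ih =>
    show (if x = b then 1 else 2) + cst (!x) (y :: s) = _
    rw [ih (!x) y]
    show _ = (y :: s).length + 1 + ((if x = y then 1 else 0) + ec (y :: s)) + _
    simp only [List.length_cons]
    cases x <;> cases y <;> cases b <;> simp <;> omega

lemma mem_inter_iff (b : Bool) (l t : ℕ) (hlt : t < l) (z : List Bool) :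
    (z ∈ delBall t (alt b l) ∩ delBall t (alt (!b) l)) ↔
      (z.length + t = l ∧ ec z + 1 ≤ t) := by
  simp only [delBall, Set.mem_inter_iff, Set.mem_setOf_eq, alt_length,
    sublist_alt_iff]
  cases z with
  | nil =>
    simp only [List.length_nil, cst]
    constructor
    · rintro ⟨⟨-, h⟩, -⟩; omega
    · rintro ⟨h, -⟩; omega
  | cons x s =>
    rw [cst_cons b x s, cst_cons (!b) x s]
    have huv : (if x = b then 0 else 1) + (if x = !b then 0 else 1) = 1 := by
      cases x <;> cases b <;> simp
    constructor
    · rintro ⟨⟨h1, hlen⟩, ⟨h2, -⟩⟩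
      refine ⟨hlen, ?_⟩
      rw [ec_cons] at *
      simp only [List.length_cons] at *
      omega
    · rintro ⟨hlen, he⟩
      have hu : (if x = b then 0 else 1) ≤ 1 := by split <;> omega
      have hv : (if x = !b then 0 else 1) ≤ 1 := by split <;> omega
      simp only [List.length_cons] at *
      exact ⟨⟨by omega, hlen⟩, ⟨by omega, hlen⟩⟩

lemma chain_ec (z : List Bool) (h : List.Chain' (· ≠ ·) z) : ec z = 0 := by
  induction z with
  | nil => rfl
  | cons x t ih =>
    rw [show List.Chain' (· ≠ ·) (x :: t) ↔ _ from List.isChain_cons] at h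
    rw [ec_cons]
    have : t.head? ≠ some x := by
      intro hh
      exact (h.1 x hh) rfl
    rw [if_neg this, ih h.2]

lemma ec_zero_alt (z : List Bool) (h : ec z = 0) : z = alt z.headI z.length := by
  induction z with
  | nil => rfl
  | cons x t ih =>
    rw [ec_cons] at h
    have ht : ec t = 0 := by omega
    have hh : t.head? ≠ some x := by
      intro hhh; rw [if_pos hhh] at h; omega
    show x :: t = alt x (t.length + 1)
    rw [show alt x (t.length + 1) = x :: alt (!x) t.length from rfl]
    cases t with
    | nil => rfl
    | cons y s =>
      have hy : y = !x := by
        simp only [List.head?_cons, ne_eq, Option.some.injEq] at hh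
        cases x <;> cases y <;> simp_all
      have h4 : y :: s = alt (!x) (y :: s).length := by
        rw [← hy]; exact ih ht
      exact congrArg (x :: ·) h4

lemma ec_alt (b : Bool) (n : ℕ) : ec (alt b n) = 0 := by
  induction n generalizing b with
  | zero => rfl
  | succ n ih =>
    rw [show alt b (n+1) = b :: alt (!b) n from rfl, ec_cons, ih]
    cases n with
    | zero => rfl
    | succ m =>
      rw [show alt (!b) (m+1) = (!b) :: alt (!(!b)) m from rfl]
      simp

lemma alt_head? (b : Bool) (n : ℕ) (hn : 1 ≤ n) : (alt b n).head? = some b := by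
  obtain ⟨m, rfl⟩ : ∃ m, n = m + 1 := ⟨n - 1, by omega⟩
  rfl

lemma altbit_succ (b : Bool) (i : ℕ) : altbit b (i+1) = altbit (!b) i := by
  unfold altbit
  rcases Nat.mod_two_eq_zero_or_one i with h | h
  · have h1 : (i+1) % 2 = 1 := by omega
    simp [h, h1]
  · have h1 : (i+1) % 2 = 0 := by omega
    simp [h, h1]

lemma dd_one (b : Bool) (m : ℕ) : dd b 1 (m+1) = b :: alt b m := by
  show alt b 1 ++ alt (altbit b 0) m = _
  have : altbit b 0 = b := by simp [altbit]
  rw [this]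
  rfl

lemma dd_self (b : Bool) (m : ℕ) : dd b m m = alt b m := by
  show alt b m ++ alt _ (m - m) = alt b m
  rw [Nat.sub_self]
  show alt b m ++ [] = alt b m
  simp

lemma dd_cons (b : Bool) (j m : ℕ) (hj : 1 ≤ j) :
    dd b (j+1) (m+1) = b :: dd (!b) j m := by
  obtain ⟨i, rfl⟩ : ∃ i, j = i + 1 := ⟨j - 1, by omega⟩
  show alt b (i+2) ++ alt (altbit b (i+1)) (m + 1 - (i+2)) = _
  rw [show alt b (i+2) = b :: alt (!b) (i+1) from rfl, altbit_succ]
  show _ = b :: (alt (!b) (i+1) ++ alt (altbit (!b) i) (m - (i+1)))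
  rw [show m + 1 - (i+2) = m - (i+1) by omega]
  rfl

lemma dd_length (b : Bool) (j m : ℕ) (hj : j ≤ m) : (dd b j m).length = m := by
  simp [dd, alt_length]; omega

lemma dd_head? (b : Bool) (j m : ℕ) (hj : 1 ≤ j) : (dd b j m).head? = some b := by
  obtain ⟨i, rfl⟩ : ∃ i, j = i + 1 := ⟨j - 1, by omega⟩
  rfl

lemma dp_alt (b : Bool) (n : ℕ) : dp (alt b n) = n := by
  induction n generalizing b with
  | zero => rfl
  | succ n ih =>
    rw [show alt b (n+1) = b :: alt (!b) n from rfl]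
    show (if (alt (!b) n).head? = some b then 1 else 1 + dp (alt (!b) n)) = n + 1
    cases n with
    | zero => rfl
    | succ m =>
      rw [alt_head? (!b) (m+1) (by omega)]
      have : (some (!b) : Option Bool) ≠ some b := by cases b <;> simp
      rw [if_neg this, ih (!b)]
      omega

lemma dp_dd (b : Bool) (j m : ℕ) (hj1 : 1 ≤ j) (hjm : j ≤ m) :
    dp (dd b j m) = j := by
  induction j generalizing b m with
  | zero => omega
  | succ i ih =>
    rcases Nat.eq_zero_or_pos i with rfl | hi
    · obtain ⟨r, rfl⟩ : ∃ r, m = r + 1 := ⟨m - 1, by omega⟩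
      rw [dd_one]
      show (if (alt b r).head? = some b then 1 else 1 + dp (alt b r)) = 1
      cases r with
      | zero => rfl
      | succ s => rw [alt_head? b (s+1) (by omega), if_pos rfl]
    · obtain ⟨r, rfl⟩ : ∃ r, m = r + 1 := ⟨m - 1, by omega⟩
      rw [dd_cons b i r hi]
      show (if (dd (!b) i r).head? = some b then 1 else 1 + dp (dd (!b) i r)) = i + 1
      rw [dd_head? (!b) i r hi]
      have : (some (!b) : Option Bool) ≠ some b := by cases b <;> simp
      rw [if_neg this, ih (!b) r hi (by omega)]
      omega

lemma ec_dd (b : Bool) (j m : ℕ) (hj1 : 1 ≤ j) (hjm : j ≤ m) :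
    ec (dd b j m) ≤ 1 := by
  induction j generalizing b m with
  | zero => omega
  | succ i ih =>
    rcases Nat.eq_zero_or_pos i with rfl | hi
    · obtain ⟨r, rfl⟩ : ∃ r, m = r + 1 := ⟨m - 1, by omega⟩
      rw [dd_one, ec_cons, ec_alt]
      split <;> omega
    · obtain ⟨r, rfl⟩ : ∃ r, m = r + 1 := ⟨m - 1, by omega⟩
      rw [dd_cons b i r hi, ec_cons]
      have h1 := ih (!b) r hi (by omega)
      rw [dd_head? (!b) i r hi]
      have hne : (some (!b) : Option Bool) ≠ some b := by cases b <;> simp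
      rw [if_neg hne]
      omega

lemma exists_dd (z : List Bool) (he : ec z ≤ 1) (hz : 1 ≤ z.length) :
    ∃ b j, 1 ≤ j ∧ j ≤ z.length ∧ z = dd b j z.length := by
  induction z with
  | nil => simp at hz
  | cons x t ih =>
    rcases Nat.lt_or_ge (ec (x :: t)) 1 with h0 | h1
    · -- ec = 0 : alternating
      have h0' : ec (x :: t) = 0 := by omega
      refine ⟨x, (x :: t).length, by simp, le_refl _, ?_⟩
      rw [dd_self]
      have := ec_zero_alt _ h0'
      simpa using this
    · have h1' : ec (x :: t) = 1 := by omega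
      rw [ec_cons] at h1'
      by_cases hh : t.head? = some x
      · rw [if_pos hh] at h1'
        have ht : ec t = 0 := by omega
        have htt := ec_zero_alt t ht
        have hth : t.headI = x := by
          cases t with
          | nil => simp at hh
          | cons y s =>
            simp only [List.head?_cons, Option.some.injEq] at hh
            simpa using hh
        refine ⟨x, 1, le_refl _, by simp, ?_⟩
        show x :: t = dd x 1 (t.length + 1)
        rw [dd_one, ← hth, ← htt]
      · rw [if_neg hh] at h1'
        have ht1 : ec t = 1 := by omega
        have htne : t ≠ [] := by
          intro h; rw [h] at ht1; simp [ec] at ht1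
        have htlen : 1 ≤ t.length := by
          cases t with
          | nil => exact absurd rfl htne
          | cons y s => simp
        obtain ⟨c, j, hj1, hjm, hteq⟩ := ih (by omega) htlen
        have hcx : c = !x := by
          have hhead := dd_head? c j t.length hj1
          rw [← hteq] at hhead
          have hcnex : c ≠ x := fun h => hh (h ▸ hhead)
          cases c <;> cases x <;>
            first
            | rfl
            | exact absurd rfl hcnex
        refine ⟨x, j + 1, by omega, by simp; omega, ?_⟩
        show x :: t = dd x (j+1) (t.length + 1)
        rw [dd_cons x j t.length hj1, ← hcx, ← hteq]

lemma alt_ne (n : ℕ) (hn : 1 ≤ n) : alt true n ≠ alt false n := by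
  obtain ⟨m, rfl⟩ : ∃ m, n = m + 1 := ⟨n - 1, by omega⟩
  intro h
  rw [show alt true (m+1) = true :: alt false m from rfl,
    show alt false (m+1) = false :: alt true m from rfl] at h
  injection h with h1 _
  exact Bool.noConfusion h1

lemma part1 (b : Bool) (l : ℕ) (hl : 2 ≤ l) :
    (delBall 1 (alt b l) ∩ delBall 1 (alt (!b) l)).ncard = 2 := by
  have hset : delBall 1 (alt b l) ∩ delBall 1 (alt (!b) l)
      = {alt true (l-1), alt false (l-1)} := by
    ext z
    rw [mem_inter_iff b l 1 (by omega) z]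
    simp only [Set.mem_insert_iff, Set.mem_singleton_iff]
    constructor
    · rintro ⟨hlen, he⟩
      have he0 : ec z = 0 := by omega
      have hz := ec_zero_alt z he0
      have hzl : z.length = l - 1 := by omega
      rw [hzl] at hz
      cases hc : z.headI
      · right; rw [hz, hc]
      · left; rw [hz, hc]
    · rintro (rfl | rfl) <;>
        exact ⟨by rw [alt_length]; omega, by simp [ec_alt]⟩
  rw [hset]
  exact Set.ncard_pair (alt_ne (l-1) (by omega))

lemma part2 (b : Bool) (l : ℕ) (hl : 3 ≤ l) :
    (delBall 2 (alt b l) ∩ delBall 2 (alt (!b) l)).ncard = 2 * (l - 2) := by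
  set m := l - 2 with hm
  have hm1 : 1 ≤ m := by omega
  set F : Finset (List Bool) :=
    (Finset.univ ×ˢ Finset.Icc 1 m).image (fun p : Bool × ℕ => dd p.1 p.2 m) with hF
  have hset : delBall 2 (alt b l) ∩ delBall 2 (alt (!b) l) = ↑F := by
    ext z
    rw [mem_inter_iff b l 2 (by omega) z]
    simp only [hF, Finset.coe_image, Set.mem_image, Finset.mem_coe,
      Finset.mem_product, Finset.mem_Icc, Finset.mem_univ, true_and,
      Finset.coe_product, Set.mem_prod, Set.mem_Icc, Prod.exists]
    constructor
    · rintro ⟨hlen, he⟩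
      have hzl : z.length = m := by omega
      obtain ⟨c, j, hj1, hjm, hzeq⟩ := exists_dd z (by omega) (by omega)
      exact ⟨c, j, ⟨hj1, by omega⟩, by rw [← hzl]; exact hzeq.symm⟩
    · rintro ⟨c, j, ⟨hj1, hjm⟩, rfl⟩
      refine ⟨by rw [dd_length c j m hjm]; omega, ?_⟩
      have := ec_dd c j m hj1 hjm
      omega
  rw [hset, Set.ncard_coe_finset, hF]
  rw [Finset.card_image_of_injOn]
  · rw [Finset.card_product, Nat.card_Icc]
    simp [Finset.card_univ]
  · rintro ⟨c, j⟩ hp ⟨c', j'⟩ hp' heq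
    simp only [Finset.mem_coe, Finset.mem_product, Finset.mem_univ, true_and,
      Finset.mem_Icc] at hp hp'
    have heq' : dd c j m = dd c' j' m := heq
    have hc : c = c' := by
      have h1 := dd_head? c j m hp.1
      have h2 := dd_head? c' j' m hp'.1
      rw [heq', h2] at h1
      exact (Option.some_inj.mp h1).symm
    have hj : j = j' := by
      have h1 := dp_dd c j m hp.1 hp.2
      have h2 := dp_dd c' j' m hp'.1 hp'.2
      rw [heq', h2] at h1
      omega
    simp [hc, hj]

/-- For an alternating sequence `a` of length `l ≥ 2` and its bitwise complement:
the one-deletion balls intersect in exactly `2` sequences, and for `l ≥ 3` the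
two-deletion balls intersect in exactly `2(l-2)` sequences. -/
theorem stmt12 (a : List Bool) (hl : 2 ≤ a.length) (ha : List.Chain' (· ≠ ·) a) :
    (delBall 1 a ∩ delBall 1 (compl' a)).ncard = 2 ∧
    (3 ≤ a.length →
      (delBall 2 a ∩ delBall 2 (compl' a)).ncard = 2 * (a.length - 2)) := by
  obtain ⟨l, hL⟩ : ∃ l, a.length = l := ⟨_, rfl⟩
  have hA : a = alt a.headI l := by rw [← hL]; exact ec_zero_alt a (chain_ec a ha)
  rw [hL] at hl
  rw [hL, hA, compl'_alt]
  exact ⟨part1 a.headI l hl, fun h3 => part2 a.headI l h3⟩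
end

section
/- Let x, y be binary sequences of length n ≥ 4 with d_L(x,y) = 1 and |D_1(x) ∩ D_1(y)| ≤ 1. Then |D_2(x) ∩ D_2(y)| ≤ n. -/
namespace Stmt13
open List

/-- one-deletion set -/
def D1 (z : List Bool) : Set (List Bool) := {w | w.Sublist z ∧ w.length + 1 = z.length}

lemma finite_sublists (x : List Bool) : {w : List Bool | w.Sublist x}.Finite := by
  apply Set.Finite.subset (x.sublists.toFinset.finite_toSet)
  intro w hw
  simpa [List.mem_sublists] using hw

lemma delBall_finite (t : ℕ) (x : List Bool) : (delBall t x).Finite :=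
  (finite_sublists x).subset (fun _ hw => hw.1)

lemma D1_finite (z : List Bool) : (D1 z).Finite :=
  (finite_sublists z).subset (fun _ hw => hw.1)

lemma sublist_of_cons_sublist_append {a : Bool} {m : List Bool} :
    ∀ {P T : List Bool}, (∀ p ∈ P, p ≠ a) → (a::m).Sublist (P ++ a::T) → m.Sublist T := by
  intro P
  induction P with
  | nil =>
      intro T _ h
      rw [nil_append] at h
      exact cons_sublist_cons.mp h
  | cons p P ih =>
      intro T hP h
      rw [cons_append] at h
      rcases sublist_cons_iff.mp h with h' | ⟨r, he, _⟩
      · exact ih (fun q hq => hP q (mem_cons_of_mem _ hq)) h'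
      · injection he with h1 _
        exact absurd h1.symm (hP p mem_cons_self)

lemma sublist_of_append_sublist {b : Bool} {m R S : List Bool}
    (hS : ∀ s ∈ S, s ≠ b) (h : (m ++ [b]).Sublist (R ++ b :: S)) : m.Sublist R := by
  have h' : (b :: m.reverse).Sublist (S.reverse ++ b :: R.reverse) := by
    have h2 := reverse_sublist.mpr h
    simpa [List.reverse_append] using h2
  have h3 := sublist_of_cons_sublist_append (fun p hp => hS p (by simpa using hp)) h'
  have h4 : m.reverse.reverse.Sublist R.reverse.reverse := reverse_sublist.mpr h3
  simpa using h4

lemma sublist_concat_iff {w z : List Bool} {b : Bool} :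
    w.Sublist (z ++ [b]) ↔ w.Sublist z ∨ ∃ t, w = t ++ [b] ∧ t.Sublist z := by
  constructor
  · intro h
    have h' : w.reverse.Sublist (b :: z.reverse) := by
      have h2 := reverse_sublist.mpr h
      simpa [List.reverse_append] using h2
    rcases sublist_cons_iff.mp h' with h'' | ⟨r, he, hr⟩
    · left
      have h4 : w.reverse.reverse.Sublist z.reverse.reverse := reverse_sublist.mpr h''
      simpa using h4
    · right
      refine ⟨r.reverse, ?_, ?_⟩
      · have := congrArg List.reverse he; simpa using this
      · have h4 : r.reverse.Sublist z.reverse.reverse := reverse_sublist.mpr hr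
        simpa using h4
  · rintro (h | ⟨t, rfl, ht⟩)
    · exact h.trans (sublist_append_left _ _)
    · exact ht.append (Sublist.refl [b])

lemma D1_cons_subset {c : Bool} {l : List Bool} :
    D1 (c::l) ⊆ insert l ((c :: ·) '' D1 l) := by
  rintro w ⟨hw, hl⟩
  rcases sublist_cons_iff.mp hw with h | ⟨r, rfl, hr⟩
  · left; exact h.eq_of_length (by simpa using hl)
  · right; exact ⟨r, ⟨hr, by simpa using hl⟩, rfl⟩

lemma D1_card (z : List Bool) : (D1 z).ncard ≤ z.length := by
  induction z with
  | nil =>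
      have : D1 ([] : List Bool) = ∅ := by ext w; simp [D1]
      simp [this]
  | cons c l ih =>
      calc (D1 (c::l)).ncard ≤ (insert l ((c :: ·) '' D1 l)).ncard :=
             Set.ncard_le_ncard D1_cons_subset (((D1_finite l).image _).insert _)
        _ ≤ ((c :: ·) '' D1 l).ncard + 1 := Set.ncard_insert_le _ _
        _ = (D1 l).ncard + 1 := by rw [Set.ncard_image_of_injective _ List.cons_injective]
        _ ≤ l.length + 1 := by omega

lemma D1_card_of_not_chain : ∀ {z : List Bool}, ¬ z.Chain' (· ≠ ·) →
    (D1 z).ncard + 1 ≤ z.length := by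
  intro z
  induction z with
  | nil => intro h; exact absurd List.isChain_nil h
  | cons c l ih =>
      intro h
      match l, ih with
      | [], _ => exact absurd (List.isChain_singleton c) h
      | d :: l', ih =>
        by_cases hcd : c = d
        · subst hcd
          have hsub : D1 (c::c::l') ⊆ (c :: ·) '' D1 (c::l') := by
            intro w hw
            rcases D1_cons_subset hw with h' | hmem
            · exact ⟨l', ⟨sublist_cons_self c l', by simp⟩, h'.symm⟩
            · exact hmem
          have h1 : (D1 (c::c::l')).ncard ≤ (D1 (c::l')).ncard := by
            calc (D1 (c::c::l')).ncard ≤ ((c :: ·) '' D1 (c::l')).ncard :=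
                   Set.ncard_le_ncard hsub ((D1_finite _).image _)
              _ = (D1 (c::l')).ncard := Set.ncard_image_of_injective _ List.cons_injective
          have h2 := D1_card (c::l')
          simp only [length_cons] at *
          omega
        · have h' : ¬ (d::l').Chain' (· ≠ ·) := fun hc => h (List.isChain_cons_cons.mpr ⟨hcd, hc⟩)
          have h1 : (D1 (c::d::l')).ncard ≤ (D1 (d::l')).ncard + 1 := by
            calc (D1 (c::d::l')).ncard ≤ (insert (d::l') ((c :: ·) '' D1 (d::l'))).ncard :=
                   Set.ncard_le_ncard D1_cons_subset (((D1_finite _).image _).insert _)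
              _ ≤ ((c :: ·) '' D1 (d::l')).ncard + 1 := Set.ncard_insert_le _ _
              _ = (D1 (d::l')).ncard + 1 := by
                  rw [Set.ncard_image_of_injective _ List.cons_injective]
          have h2 := ih h'
          simp only [length_cons] at *
          omega

lemma lev1 : ∀ (Q R : List Bool), Q.length = R.length → Q ≠ R →
    (D1 Q ∩ D1 R).ncard ≤ 2 := by
  intro Q
  induction Q with
  | nil =>
      intro R hl hne
      have hR : R = [] := List.length_eq_zero_iff.mp hl.symm
      exact absurd hR.symm hne
  | cons q Q' ih =>
      intro R hl hne
      match R with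
      | [] => simp at hl
      | r :: R' =>
        by_cases hqr : q = r
        · subst hqr
          have hQR' : Q' ≠ R' := fun h => hne (by rw [h])
          have hsub : D1 (q::Q') ∩ D1 (q::R') ⊆ (q :: ·) '' (D1 Q' ∩ D1 R') := by
            rintro w ⟨⟨hw1, hl1⟩, ⟨hw2, hl2⟩⟩
            by_cases hw : ∃ t, w = q :: t
            · obtain ⟨t, rfl⟩ := hw
              exact ⟨t, ⟨⟨cons_sublist_cons.mp hw1, by simpa using hl1⟩,
                         ⟨cons_sublist_cons.mp hw2, by simpa using hl2⟩⟩, rfl⟩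
            · exfalso
              rcases sublist_cons_iff.mp hw1 with h1 | ⟨t, ht, _⟩
              · rcases sublist_cons_iff.mp hw2 with h2 | ⟨t, ht, _⟩
                · exact hQR' ((h1.eq_of_length (by simpa using hl1)).symm.trans
                      (h2.eq_of_length (by simpa using hl2)))
                · exact hw ⟨t, ht⟩
              · exact hw ⟨t, ht⟩
          calc (D1 (q::Q') ∩ D1 (q::R')).ncard
              ≤ ((q :: ·) '' (D1 Q' ∩ D1 R')).ncard :=
                Set.ncard_le_ncard hsub (((D1_finite Q').inter_of_left _).image _)
            _ = (D1 Q' ∩ D1 R').ncard := Set.ncard_image_of_injective _ List.cons_injective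
            _ ≤ 2 := ih R' (by simpa using hl) hQR'
        · have hsub : D1 (q::Q') ∩ D1 (r::R') ⊆ {Q', R'} := by
            rintro w ⟨⟨hw1, hl1⟩, ⟨hw2, hl2⟩⟩
            rcases sublist_cons_iff.mp hw1 with h1 | ⟨t, rfl, _⟩
            · left; exact h1.eq_of_length (by simpa using hl1)
            · rcases sublist_cons_iff.mp hw2 with h2 | ⟨s, hes, _⟩
              · right; exact h2.eq_of_length (by simpa using hl2)
              · exfalso; injection hes with h1 _; exact hqr h1
          calc (D1 (q::Q') ∩ D1 (r::R')).ncard ≤ ({Q', R'} : Set (List Bool)).ncard :=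
                Set.ncard_le_ncard hsub (Set.toFinite _)
            _ ≤ ({R'} : Set (List Bool)).ncard + 1 := Set.ncard_insert_le _ _
            _ ≤ 2 := by simp


lemma stepA {a : Bool} {x' y' z' : List Bool}
    (huniq : ∀ w, w.Sublist x' → w.Sublist y' → w.length + 1 = x'.length → w = z') :
    (delBall 2 (a::x') ∩ delBall 2 (a::y')) ⊆
      insert z' ((a :: ·) '' (delBall 2 x' ∩ delBall 2 y')) := by
  rintro w ⟨⟨hwx, hlx⟩, ⟨hwy, hly⟩⟩
  simp only [length_cons] at hlx hly
  rcases sublist_cons_iff.mp hwx with h1 | ⟨t, rfl, ht⟩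
  · rcases sublist_cons_iff.mp hwy with h2 | ⟨s, hes, hs⟩
    · left; exact huniq w h1 h2 (by omega)
    · right; subst hes
      refine ⟨s, ⟨⟨(sublist_cons_self a s).trans h1, ?_⟩, ⟨hs, ?_⟩⟩, rfl⟩
      · simp only [length_cons] at hlx; omega
      · simp only [length_cons] at hly; omega
  · right
    have hty : t.Sublist y' := by
      rcases sublist_cons_iff.mp hwy with h2 | ⟨s, hes, hs⟩
      · exact (sublist_cons_self a t).trans h2
      · injection hes with _ h; exact h ▸ hs
    refine ⟨t, ⟨⟨ht, ?_⟩, ⟨hty, ?_⟩⟩, rfl⟩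
    · simp only [length_cons] at hlx; omega
    · simp only [length_cons] at hly; omega

lemma delBall_reverse (t : ℕ) (x : List Bool) :
    delBall t x.reverse = List.reverse '' delBall t x := by
  ext w
  constructor
  · rintro ⟨hw, hl⟩
    refine ⟨w.reverse, ⟨?_, by simpa using hl⟩, by simp⟩
    have := reverse_sublist.mpr hw
    simpa using this
  · rintro ⟨v, ⟨hv, hl⟩, rfl⟩
    exact ⟨reverse_sublist.mpr hv, by simpa using hl⟩

lemma caseA_main {n : ℕ} {a : Bool} {x' y' z : List Bool}
    (hx : x'.length + 1 = n) (hy : y'.length + 1 = n) (hne : x' ≠ y')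
    (hzx : z.Sublist (a::x')) (hzy : z.Sublist (a::y')) (hzl : z.length + 1 = n)
    (huniq : ∀ w, w.Sublist (a::x') → w.Sublist (a::y') → w.length + 1 = n → w = z)
    (hrec : ∀ x y zz : List Bool, x.length = n - 1 → y.length = n - 1 → x ≠ y →
        zz.Sublist x → zz.Sublist y → zz.length + 1 = n - 1 →
        (∀ w, w.Sublist x → w.Sublist y → w.length + 1 = n - 1 → w = zz) →
        (delBall 2 x ∩ delBall 2 y).ncard ≤ n - 1)
    (hn : 2 ≤ n) :
    (delBall 2 (a::x') ∩ delBall 2 (a::y')).ncard ≤ n := by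
  -- derive z = a :: z'
  have hzz : ∃ z', z = a :: z' ∧ z'.Sublist x' ∧ z'.Sublist y' := by
    rcases sublist_cons_iff.mp hzx with h | ⟨t, het, ht⟩
    · have hzx' : z = x' := h.eq_of_length (by omega)
      subst hzx'
      rcases sublist_cons_iff.mp hzy with h2 | ⟨t, het, ht⟩
      · exact absurd (h2.eq_of_length (by omega)) hne
      · exact ⟨t, het, het ▸ sublist_cons_self a t, ht⟩
    · refine ⟨t, het, ht, ?_⟩
      rw [het] at hzy
      exact cons_sublist_cons.mp hzy
  obtain ⟨z', rfl, hz'x, hz'y⟩ := hzz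
  simp only [length_cons] at hzl
  have huniq' : ∀ w, w.Sublist x' → w.Sublist y' → w.length + 1 = x'.length → w = z' := by
    intro w h1 h2 h3
    have h4 := huniq (a::w) (cons_sublist_cons.mpr h1) (cons_sublist_cons.mpr h2)
      (by simp only [length_cons]; omega)
    exact List.cons_injective h4
  have hrec2 : (delBall 2 x' ∩ delBall 2 y').ncard ≤ n - 1 :=
    hrec x' y' z' (by omega) (by omega) hne hz'x hz'y (by omega)
      (fun w h1 h2 h3 => huniq' w h1 h2 (by omega))
  have hfin : ((a :: ·) '' (delBall 2 x' ∩ delBall 2 y')).Finite :=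
    ((delBall_finite 2 x').inter_of_left _).image _
  calc (delBall 2 (a::x') ∩ delBall 2 (a::y')).ncard
      ≤ (insert z' ((a :: ·) '' (delBall 2 x' ∩ delBall 2 y'))).ncard :=
        Set.ncard_le_ncard (stepA huniq') (hfin.insert _)
    _ ≤ ((a :: ·) '' (delBall 2 x' ∩ delBall 2 y')).ncard + 1 := Set.ncard_insert_le _ _
    _ = (delBall 2 x' ∩ delBall 2 y').ncard + 1 := by
        rw [Set.ncard_image_of_injective _ List.cons_injective]
    _ ≤ n := by omega

lemma base_bound {n : ℕ} (hn : n ≤ 4) (x y : List Bool) (hx : x.length = n) :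
    (delBall 2 x ∩ delBall 2 y).ncard ≤ n := by
  have hsub : delBall 2 x ∩ delBall 2 y ⊆ {w : List Bool | w.length + 2 = n} := by
    rintro w ⟨⟨_, hl⟩, _⟩
    simp only [Set.mem_setOf_eq]
    omega
  interval_cases n
  · have : delBall 2 x ∩ delBall 2 y = ∅ := by
      rw [Set.eq_empty_iff_forall_notMem]
      intro w hw
      have := hsub hw; simp at this
    simp [this]
  · have : delBall 2 x ∩ delBall 2 y = ∅ := by
      rw [Set.eq_empty_iff_forall_notMem]
      intro w hw
      have := hsub hw; simp at this
    simp [this]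
  · have h2 : delBall 2 x ∩ delBall 2 y ⊆ {([] : List Bool)} := by
      intro w hw
      have := hsub hw
      simp only [Set.mem_setOf_eq] at this
      have : w.length = 0 := by omega
      simp [List.length_eq_zero_iff.mp this]
    calc (delBall 2 x ∩ delBall 2 y).ncard ≤ ({([] : List Bool)} : Set (List Bool)).ncard :=
          Set.ncard_le_ncard h2 (Set.toFinite _)
      _ ≤ 2 := by simp
  · have h2 : delBall 2 x ∩ delBall 2 y ⊆ {[false], [true]} := by
      intro w hw
      have hl := hsub hw
      simp only [Set.mem_setOf_eq] at hl
      have hl : w.length = 1 := by omega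
      obtain ⟨c, rfl⟩ := List.length_eq_one_iff.mp hl
      cases c <;> simp
    calc (delBall 2 x ∩ delBall 2 y).ncard ≤ ({[false], [true]} : Set (List Bool)).ncard :=
          Set.ncard_le_ncard h2 (Set.toFinite _)
      _ ≤ ({[true]} : Set (List Bool)).ncard + 1 := Set.ncard_insert_le _ _
      _ ≤ 3 := by simp
  · have h2 : delBall 2 x ∩ delBall 2 y ⊆
        {[false, false], [false, true], [true, false], [true, true]} := by
      intro w hw
      have hl := hsub hw
      simp only [Set.mem_setOf_eq] at hl
      have hl : w.length = 2 := by omega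
      match w, hl with
      | [c, d], _ => cases c <;> cases d <;> simp
    calc (delBall 2 x ∩ delBall 2 y).ncard
        ≤ ({[false, false], [false, true], [true, false], [true, true]} : Set (List Bool)).ncard :=
          Set.ncard_le_ncard h2 (Set.toFinite _)
      _ ≤ ({[false, true], [true, false], [true, true]} : Set (List Bool)).ncard + 1 :=
          Set.ncard_insert_le _ _
      _ ≤ (({[true, false], [true, true]} : Set (List Bool)).ncard + 1) + 1 := by
          have := Set.ncard_insert_le ([false, true]) ({[true, false], [true, true]} : Set (List Bool))
          omega
      _ ≤ ((({[true, true]} : Set (List Bool)).ncard + 1) + 1) + 1 := by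
          have := Set.ncard_insert_le ([true, false]) ({[true, true]} : Set (List Bool))
          omega
      _ ≤ 4 := by simp


lemma first_occ {a : Bool} {z : List Bool} (haz : a ∈ z) (h0 : z.head? ≠ some a) :
    ∃ P T, z = P ++ a :: T ∧ (∀ p ∈ P, p ≠ a) ∧ 1 ≤ P.length := by
  set P := z.takeWhile (fun x => x != a) with hP
  set D := z.dropWhile (fun x => x != a) with hD
  have hzPD : P ++ D = z := List.takeWhile_append_dropWhile
  have hDne : D ≠ [] := by
    intro h
    rw [hD, List.dropWhile_eq_nil_iff] at h
    have := h a haz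
    simp at this
  obtain ⟨c, T, hcT⟩ := List.exists_cons_of_ne_nil hDne
  have hca : c = a := by
    have hh := List.head?_dropWhile_not (fun x => x != a) z
    rw [← hD, hcT] at hh
    simpa using hh
  subst hca
  refine ⟨P, T, by rw [← hzPD, hcT], ?_, ?_⟩
  · intro p hp
    have := List.mem_takeWhile_imp (hP ▸ hp)
    simpa using this
  · rcases P with _ | ⟨p, P'⟩
    · exfalso
      apply h0
      rw [← hzPD, hcT]
      simp
    · simp

lemma coreCase {n : ℕ} {a b : Bool} {z : List Bool} (hzl : z.length + 1 = n) (hn : 5 ≤ n)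
    (ha : z.head? ≠ some a) (hb : z.getLast? ≠ some b)
    (huniq : ∀ w, w.Sublist (a::z) → w.Sublist (z++[b]) → w.length + 1 = n → w = z) :
    (delBall 2 (a::z) ∩ delBall 2 (z++[b])).ncard ≤ n := by
  set W := delBall 2 (a::z) ∩ delBall 2 (z++[b]) with hW
  set M : Set (List Bool) :=
    {m | m.length + 4 = n ∧ (a::m).Sublist z ∧ (m++[b]).Sublist z} with hM
  have hWfin : W.Finite := (delBall_finite 2 _).inter_of_left _
  have hMfin : M.Finite :=
    (finite_sublists z).subset (fun m hm => (sublist_append_left m [b]).trans hm.2.2)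
  have hD1z := D1_card z
  -- W is covered by D1 z and the image of M
  have hWsub : W ⊆ D1 z ∪ (fun m => a :: (m ++ [b])) '' M := by
    rintro w ⟨⟨hwx, hlx⟩, ⟨hwy, hly⟩⟩
    simp only [length_cons] at hlx
    by_cases hwz : w.Sublist z
    · left; exact ⟨hwz, by omega⟩
    · right
      rcases sublist_cons_iff.mp hwx with h | ⟨q, rfl, hq⟩
      · exact absurd h hwz
      rcases sublist_concat_iff.mp hwy with h | ⟨t, het, htz⟩
      · exact absurd h hwz
      match t, het, htz with
      | [], het, _ =>
          exfalso
          simp only [nil_append] at het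
          injection het with _ hq0
          subst hq0
          simp only [length_cons, length_nil] at hlx
          omega
      | c :: t', het, htz =>
          rw [cons_append] at het
          injection het with h1 h2
          subst h1
          refine ⟨t', ⟨?_, htz, h2 ▸ hq⟩, by simp [← h2]⟩
          have := congrArg List.length h2
          simp only [length_append, length_singleton] at this
          simp only [length_cons] at hlx
          omega
  have hcard : W.ncard ≤ (D1 z).ncard + M.ncard := by
    calc W.ncard ≤ (D1 z ∪ (fun m => a :: (m ++ [b])) '' M).ncard :=
          Set.ncard_le_ncard hWsub ((D1_finite z).union (hMfin.image _))
      _ ≤ (D1 z).ncard + ((fun m => a :: (m ++ [b])) '' M).ncard := Set.ncard_union_le _ _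
      _ ≤ (D1 z).ncard + M.ncard := by
          have := Set.ncard_image_le (s := M) (f := fun m => a :: (m ++ [b])) hMfin
          omega
  rcases Set.eq_empty_or_nonempty M with hMe | ⟨m₀, hm₀⟩
  · rw [hMe] at hcard
    simp only [Set.ncard_empty, add_zero] at hcard
    omega
  · have haz : a ∈ z := hm₀.2.1.subset (mem_cons_self (a := a))
    have hbz : b ∈ z := hm₀.2.2.subset (by simp)
    -- prefix decomposition at first a
    obtain ⟨P, T, hzPT, hPa, hPlen⟩ := first_occ haz ha
    -- suffix decomposition at last b
    obtain ⟨R, S, hzRS, hSb, hSlen⟩ : ∃ R S, z = R ++ b :: S ∧ (∀ s ∈ S, s ≠ b) ∧ 1 ≤ S.length := by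
      have hbz' : b ∈ z.reverse := by simpa using hbz
      have hb' : z.reverse.head? ≠ some b := by
        rw [← List.getLast?_eq_head?_reverse] at *
        exact hb
      obtain ⟨P', T', hzPT', hPa', hPlen'⟩ := first_occ hbz' hb'
      refine ⟨T'.reverse, P'.reverse, ?_, fun s hs => hPa' s (by simpa using hs), by simpa using hPlen'⟩
      have := congrArg List.reverse hzPT'
      simpa [List.reverse_append] using this
    -- every member of M is a sublist of T and of R
    have hmT : ∀ m ∈ M, m.Sublist T := fun m hm =>
      sublist_of_cons_sublist_append hPa (hzPT ▸ hm.2.1)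
    have hmR : ∀ m ∈ M, m.Sublist R := fun m hm =>
      sublist_of_append_sublist hSb (hzRS ▸ hm.2.2)
    have hlPT : z.length = P.length + T.length + 1 := by
      have := congrArg List.length hzPT
      simp only [length_append, length_cons] at this
      omega
    have hlRS : z.length = R.length + S.length + 1 := by
      have := congrArg List.length hzRS
      simp only [length_append, length_cons] at this
      omega
    have hTge : m₀.length ≤ T.length := (hmT m₀ hm₀).length_le
    have hRge : m₀.length ≤ R.length := (hmR m₀ hm₀).length_le
    have hm₀l : m₀.length + 4 = n := hm₀.1
    by_cases hT4 : T.length + 4 = n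
    · -- M ⊆ {T}
      have hMsub : M ⊆ {T} := by
        intro m hm
        have : m = T := (hmT m hm).eq_of_length (by have := hm.1; omega)
        simp [this]
      have : M.ncard ≤ 1 := by
        calc M.ncard ≤ ({T} : Set (List Bool)).ncard := Set.ncard_le_ncard hMsub (Set.toFinite _)
          _ = 1 := Set.ncard_singleton _
      omega
    · by_cases hR4 : R.length + 4 = n
      · have hMsub : M ⊆ {R} := by
          intro m hm
          have : m = R := (hmR m hm).eq_of_length (by have := hm.1; omega)
          simp [this]
        have : M.ncard ≤ 1 := by
          calc M.ncard ≤ ({R} : Set (List Bool)).ncard := Set.ncard_le_ncard hMsub (Set.toFinite _)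
            _ = 1 := Set.ncard_singleton _
        omega
      · -- deficit one on both sides
        have hT3 : T.length + 3 = n := by omega
        have hR3 : R.length + 3 = n := by omega
        have hP1 : P.length = 1 := by omega
        have hS1 : S.length = 1 := by omega
        obtain ⟨p, rfl⟩ := List.length_eq_one_iff.mp hP1
        obtain ⟨s, rfl⟩ := List.length_eq_one_iff.mp hS1
        by_cases hTR : T = R
        · -- contradiction with uniqueness
          exfalso
          have h1 : (a :: (T ++ [b])).Sublist (a :: z) := by
            apply cons_sublist_cons.mpr
            rw [hzRS, ← hTR]
            exact Sublist.append_left (by simp) T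
          have h2 : (a :: (T ++ [b])).Sublist (z ++ [b]) := by
            have hsub : (a :: T).Sublist z := by
              rw [hzPT]
              simp only [singleton_append]
              exact sublist_cons_self _ _
            have := hsub.append (Sublist.refl [b])
            simpa using this
          have h3 := huniq (a :: (T ++ [b])) h1 h2 (by simp only [length_cons, length_append, length_singleton, length_nil]; omega)
          have := congrArg List.head? h3
          simp only [head?_cons] at this
          exact ha this.symm
        · -- M injects into D1 T ∩ D1 R
          have hMsub : M ⊆ D1 T ∩ D1 R := by
            intro m hm
            exact ⟨⟨hmT m hm, by have := hm.1; omega⟩, ⟨hmR m hm, by have := hm.1; omega⟩⟩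
          have hM2 : M.ncard ≤ 2 :=
            (Set.ncard_le_ncard hMsub ((D1_finite T).inter_of_left _)).trans
              (lev1 T R (by omega) hTR)
          -- z is not alternating
          have hchain : ¬ z.Chain' (· ≠ ·) := by
            intro hc
            apply hTR
            have hTd : z.drop 2 = T := by rw [hzPT]; rfl
            have hRd : z.dropLast.dropLast = R := by
              rw [hzRS, show R ++ b :: [s] = (R ++ [b]) ++ [s] by simp,
                List.dropLast_concat, List.dropLast_concat]
            rw [← hTd, ← hRd]
            apply List.ext_getElem
            · simp only [List.length_drop, List.length_dropLast]
              omega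
            · intro i hi1 hi2
              rw [List.getElem_drop, List.getElem_dropLast, List.getElem_dropLast]
              simp only [List.length_drop] at hi1
              have key : ∀ u v w : Bool, u ≠ v → v ≠ w → u = w := by decide
              have e1 : z[i] ≠ z[i+1] := by
                have := List.isChain_iff_getElem.mp hc i (by omega)
                simpa [List.get_eq_getElem] using this
              have e2 : z[i+1] ≠ z[i+1+1] := by
                have := List.isChain_iff_getElem.mp hc (i+1) (by omega)
                simpa [List.get_eq_getElem] using this
              have e3 : z[i] = z[i+1+1] := key _ _ _ e1 e2
              have hidx : 2 + i = i + 1 + 1 := by omega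
              simp only [hidx]
              exact e3.symm
          have := D1_card_of_not_chain hchain
          omega


lemma caseC_main {n : ℕ} {a : Bool} {z y : List Bool}
    (hzl : z.length + 1 = n) (hy : y.length = n) (hn : 5 ≤ n)
    (hzy : z.Sublist y)
    (hhead : y.head? ≠ some a)
    (hlast : y.getLast? ≠ (a::z).getLast?)
    (huniq : ∀ w, w.Sublist (a::z) → w.Sublist y → w.length + 1 = n → w = z) :
    (delBall 2 (a::z) ∩ delBall 2 y).ncard ≤ n := by
  have hzne : z ≠ [] := by intro h; rw [h] at hzl; simp at hzl; omega
  have hyne : y ≠ [] := by intro h; rw [h] at hy; simp at hy; omega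
  obtain ⟨zl, ZR, hZ⟩ := List.exists_cons_of_ne_nil
    (fun h : z.reverse = [] => hzne (by simpa using h))
  obtain ⟨q, RY, hY⟩ := List.exists_cons_of_ne_nil
    (fun h : y.reverse = [] => hyne (by simpa using h))
  have hzlast : z.getLast? = some zl := by
    rw [List.getLast?_eq_head?_reverse, hZ]; rfl
  have hazlast : (a::z).getLast? = some zl := by
    rw [List.getLast?_eq_head?_reverse]
    have h1 : (a::z).reverse = zl :: (ZR ++ [a]) := by simp [hZ]
    rw [h1]; rfl
  have hylast : y.getLast? = some q := by
    rw [List.getLast?_eq_head?_reverse, hY]; rfl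
  have hqzl : q ≠ zl := by
    intro h; apply hlast; rw [hylast, hazlast, h]
  have hzy' : z.reverse.Sublist (q :: RY) := by
    rw [← hY]; exact reverse_sublist.mpr hzy
  have hZR : z.reverse = RY := by
    rcases sublist_cons_iff.mp hzy' with h | ⟨r, her, _⟩
    · apply h.eq_of_length
      have h1 := congrArg List.length hY
      simp only [length_reverse, length_cons] at h1 ⊢
      omega
    · exfalso; rw [hZ] at her; injection her with h1 _; exact hqzl h1.symm
  have hyz : y = z ++ [q] := by
    have h1 : y.reverse = q :: z.reverse := by rw [hY, hZR]
    have h2 := congrArg List.reverse h1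
    simpa using h2
  subst hyz
  have hhz : z.head? ≠ some a := by
    intro h
    apply hhead
    obtain ⟨zh, zt, rfl⟩ := List.exists_cons_of_ne_nil hzne
    simp only [head?_cons] at h
    simpa using h
  have hbz : z.getLast? ≠ some q := by
    rw [hzlast]
    simp only [ne_eq, Option.some.injEq]
    exact fun h => hqzl h.symm
  exact coreCase hzl hn hhz hbz huniq

lemma main : ∀ (n : ℕ) (x y z : List Bool), x.length = n → y.length = n → x ≠ y →
    z.Sublist x → z.Sublist y → z.length + 1 = n →
    (∀ w, w.Sublist x → w.Sublist y → w.length + 1 = n → w = z) →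
    (delBall 2 x ∩ delBall 2 y).ncard ≤ n := by
  intro n
  induction n using Nat.strong_induction_on with
  | _ n IH =>
    intro x y z hx hy hne hzx hzy hzl huniq
    by_cases hn5 : n < 5
    · exact base_bound (by omega) x y hx
    push_neg at hn5
    obtain ⟨a, x', rfl⟩ := List.exists_cons_of_ne_nil
      (show x ≠ [] by intro h; rw [h] at hx; simp at hx; omega)
    obtain ⟨b, y', rfl⟩ := List.exists_cons_of_ne_nil
      (show y ≠ [] by intro h; rw [h] at hy; simp at hy; omega)
    simp only [length_cons] at hx hy
    by_cases hab : a = b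
    · subst hab
      exact caseA_main (by omega) (by omega) (fun h => hne (by rw [h]))
        hzx hzy hzl huniq
        (fun X Y ZZ h1 h2 h3 h4 h5 h6 h7 => IH (n-1) (by omega) X Y ZZ h1 h2 h3 h4 h5 h6 h7)
        (by omega)
    · obtain ⟨p, X', hX⟩ := List.exists_cons_of_ne_nil
        (show (a::x').reverse ≠ [] by simp)
      obtain ⟨q, Y', hYr⟩ := List.exists_cons_of_ne_nil
        (show (b::y').reverse ≠ [] by simp)
      by_cases hpq : p = q
      · subst hpq
        have hgoal : (delBall 2 (a::x') ∩ delBall 2 (b::y')).ncard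
            = (delBall 2 (p::X') ∩ delBall 2 (p::Y')).ncard := by
          rw [← hX, ← hYr, delBall_reverse, delBall_reverse,
              ← Set.image_inter List.reverse_injective,
              Set.ncard_image_of_injective _ List.reverse_injective]
        rw [hgoal]
        have hzz : z.reverse.Sublist (p::X') := by
          rw [← hX]; exact reverse_sublist.mpr hzx
        have hzz2 : z.reverse.Sublist (p::Y') := by
          rw [← hYr]; exact reverse_sublist.mpr hzy
        have hlX : X'.length + 1 = n := by
          have h1 := congrArg List.length hX; simp at h1; omega
        have hlY : Y'.length + 1 = n := by
          have h1 := congrArg List.length hYr; simp at h1; omega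
        have hneXY : X' ≠ Y' := by
          intro h
          apply hne
          have h1 : (a::x').reverse = (b::y').reverse := by rw [hX, hYr, h]
          have h2 := congrArg List.reverse h1
          simpa using h2
        have huniqR : ∀ w, w.Sublist (p::X') → w.Sublist (p::Y') →
            w.length + 1 = n → w = z.reverse := by
          intro w h1 h2 h3
          rw [← hX] at h1; rw [← hYr] at h2
          have h4 : w.reverse.Sublist (a::x') := by
            have h5 := reverse_sublist.mpr h1; simpa using h5
          have h5 : w.reverse.Sublist (b::y') := by
            have h6 := reverse_sublist.mpr h2; simpa using h6
          have h6 := huniq w.reverse h4 h5 (by simpa using h3)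
          rw [← h6]; simp
        exact caseA_main hlX hlY hneXY hzz hzz2 (by simpa using hzl) huniqR
          (fun X Y ZZ h1 h2 h3 h4 h5 h6 h7 => IH (n-1) (by omega) X Y ZZ h1 h2 h3 h4 h5 h6 h7)
          (by omega)
      · have hz_tail : z = x' ∨ z = y' := by
          rcases sublist_cons_iff.mp hzx with h | ⟨t, het, _⟩
          · left; exact h.eq_of_length (by omega)
          · rcases sublist_cons_iff.mp hzy with h2 | ⟨s, hes, _⟩
            · right; exact h2.eq_of_length (by omega)
            · exfalso; rw [het] at hes; injection hes with h1 _; exact hab h1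
        have hlastne : (b::y').getLast? ≠ (a::x').getLast? := by
          rw [List.getLast?_eq_head?_reverse, List.getLast?_eq_head?_reverse, hX, hYr]
          simp only [head?_cons, ne_eq, Option.some.injEq]
          exact fun h => hpq h.symm
        rcases hz_tail with rfl | rfl
        · exact caseC_main hzl (by simp only [length_cons]; omega) hn5 hzy
            (by simp only [head?_cons, ne_eq, Option.some.injEq]
                exact fun h => hab h.symm)
            hlastne huniq
        · rw [Set.inter_comm]
          exact caseC_main hzl (by simp only [length_cons]; omega) hn5 hzx
            (by simp only [head?_cons, ne_eq, Option.some.injEq]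
                exact hab)
            hlastne.symm
            (fun w h1 h2 h3 => huniq w h2 h1 h3)

end Stmt13

/-- If `x`, `y` have length `n ≥ 4`, Levenshtein distance `1`, and their one-deletion
balls intersect in at most one sequence, then their two-deletion balls intersect in
at most `n` sequences. -/
theorem stmt13 (n : ℕ) (x y : List Bool) (hx : x.length = n) (hy : y.length = n)
    (hn : 4 ≤ n) (hd : levDist x y = 1)
    (h1 : (delBall 1 x ∩ delBall 1 y).ncard ≤ 1) :
    (delBall 2 x ∩ delBall 2 y).ncard ≤ n := by
  unfold levDist at hd
  have hSne : {r | ((delBall r x) ∩ (delBall r y)).Nonempty}.Nonempty := by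
    by_contra h
    rw [Set.not_nonempty_iff_eq_empty] at h
    rw [h, Nat.sInf_empty] at hd
    omega
  have h1mem : (1:ℕ) ∈ {r | ((delBall r x) ∩ (delBall r y)).Nonempty} := by
    have h2 := Nat.sInf_mem hSne
    rwa [hd] at h2
  obtain ⟨z, hz1, hz2⟩ := h1mem
  simp only [delBall, Set.mem_setOf_eq] at hz1 hz2
  have hne : x ≠ y := by
    rintro rfl
    have h0 : (0:ℕ) ∈ {r | ((delBall r x) ∩ (delBall r x)).Nonempty} :=
      ⟨x, ⟨List.Sublist.refl x, by simp⟩, ⟨List.Sublist.refl x, by simp⟩⟩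
    have h3 : sInf {r | ((delBall r x) ∩ (delBall r x)).Nonempty} = 0 :=
      Nat.sInf_eq_zero.mpr (Or.inl h0)
    omega
  have hfin1 : (delBall 1 x ∩ delBall 1 y).Finite :=
    (Stmt13.delBall_finite 1 x).inter_of_left _
  have huniq : ∀ w, w.Sublist x → w.Sublist y → w.length + 1 = n → w = z := by
    intro w hw1 hw2 hw3
    exact (Set.ncard_le_one hfin1).mp h1 w
      ⟨⟨hw1, by omega⟩, ⟨hw2, by omega⟩⟩ z ⟨⟨hz1.1, hz1.2⟩, ⟨hz2.1, hz2.2⟩⟩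
  exact Stmt13.main n x y z hx hy hne hz1.1 hz2.1 (by have := hz1.2; omega) huniq
end

section
/- Let n ≥ 7 and let x = u ∘ a ∘ v, y = u ∘ ā ∘ v be binary sequences of length n, where u, a, v are all alternating sequences, |a| = l ≥ 2, |u| = s, |v| = t, s + l + t = n. If 3 ≤ l ≤ n − 2, s ≥ 1, and t ≥ 1, then |D_2(x) ∩ D_2(y)| = 2n − 6. -/
namespace S14

def altb : Bool → ℕ → List Bool
  | _, 0 => []
  | c, n+1 => c :: altb (!c) n

def cost : Bool → List Bool → ℕ
  | _, [] => 0
  | c, b :: q => (if b = c then 1 else 2) + cost (!b) q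

def eqadj : List Bool → ℕ
  | [] => 0
  | [_] => 0
  | a :: b :: q => (if a = b then 1 else 0) + eqadj (b :: q)

@[simp] lemma length_altb (c : Bool) (n : ℕ) : (altb c n).length = n := by
  induction n generalizing c with
  | zero => rfl
  | succ n ih => simp [altb, ih]

@[simp] lemma headI_altb (c : Bool) (n : ℕ) : (altb c (n+1)).headI = c := rfl

lemma chain'_eq_altb : ∀ (w : List Bool), List.Chain' (· ≠ ·) w → w = altb w.headI w.length
  | [], _ => rfl
  | [a], _ => rfl
  | a :: b :: q, h => by
    simp only [List.Chain', List.isChain_cons_cons] at h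
    have h1 : b = !a := by
      cases a <;> cases b <;> simp_all
    have := chain'_eq_altb (b :: q) h.2
    simp only [List.headI] at this ⊢
    rw [List.length_cons, altb, ← h1, ← this]

lemma compl'_altb (c : Bool) (n : ℕ) : compl' (altb c n) = altb (!c) n := by
  induction n generalizing c with
  | zero => rfl
  | succ n ih =>
    show (!c) :: compl' (altb (!c) n) = (!c) :: altb (!(!c)) n
    rw [ih]

lemma length_le_cost (c : Bool) (q : List Bool) : q.length ≤ cost c q := by
  induction q generalizing c with
  | nil => simp [cost]
  | cons b q ih =>
    simp only [cost, List.length_cons]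
    have := ih (!b)
    split <;> omega

lemma cost_headI_le (c : Bool) (q : List Bool) : cost q.headI q ≤ cost c q := by
  cases q with
  | nil => exact le_refl _
  | cons b q => simp only [cost, List.headI]; simp only [if_true]; split <;> omega

lemma cost_eq_headI (c : Bool) (q : List Bool) (hq : q ≠ []) :
    cost c q = cost q.headI q + (if q.headI = c then 0 else 1) := by
  cases q with
  | nil => simp at hq
  | cons b q => simp only [cost, List.headI]; simp only [if_true]; by_cases h : b = c <;> simp [h] <;> omega


lemma cost_le_one_add (c : Bool) (q : List Bool) : cost c q ≤ 1 + cost (!c) q := by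
  cases q with
  | nil => simp [cost]
  | cons b q => cases b <;> cases c <;> simp [cost] <;> omega

lemma sublist_altb_iff (p : List Bool) (c : Bool) (n : ℕ) :
    p.Sublist (altb c n) ↔ cost c p ≤ n := by
  induction n generalizing p c with
  | zero =>
    simp only [altb, List.sublist_nil, Nat.le_zero]
    constructor
    · rintro rfl; simp [cost]
    · intro h; cases p with
      | nil => rfl
      | cons b q => simp [cost] at h; split at h <;> omega
  | succ n ih =>
    constructor
    · intro h
      rw [show altb c (n+1) = c :: altb (!c) n from rfl] at h
      cases h with
      | cons _ h =>
        have h1 := (ih _ (!c)).1 h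
        have h2 := cost_le_one_add c p
        omega
      | cons_cons _ h =>
        rename_i q
        have h1 := (ih q (!c)).1 h
        simp only [cost, eq_self_iff_true, if_true]
        omega
    · intro h
      cases p with
      | nil => exact List.nil_sublist _
      | cons b q =>
        by_cases hbc : b = c
        · subst hbc
          simp only [cost, eq_self_iff_true, if_true] at h
          have : q.Sublist (altb (!b) n) := (ih q (!b)).2 (by omega)
          exact this.cons₂ b
        · have h2 : cost (!c) (b :: q) + 1 ≤ cost c (b :: q) := by
            have : b = !c := by cases b <;> cases c <;> simp_all
            subst this
            simp [cost] at hbc ⊢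
          have : (b :: q).Sublist (altb (!c) n) := (ih _ (!c)).2 (by omega)
          exact this.cons c

lemma cost_append_right (c : Bool) (p q : List Bool) :
    cost c p + q.length ≤ cost c (p ++ q) := by
  induction p generalizing c with
  | nil => simpa [cost] using length_le_cost c q
  | cons b p ih =>
    simp only [List.cons_append, cost, List.append_eq]
    have := ih (!b)
    omega

lemma cost_append_headI (c : Bool) (p q : List Bool) :
    p.length + cost q.headI q ≤ cost c (p ++ q) := by
  induction p generalizing c with
  | nil => simpa using cost_headI_le c q
  | cons b p ih =>
    simp only [List.cons_append, cost, List.length_cons, List.append_eq]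
    have := ih (!b)
    split <;> omega

lemma headI_append (q r : List Bool) (hq : q ≠ []) : (q ++ r).headI = q.headI := by
  cases q with
  | nil => simp at hq
  | cons b q => rfl

lemma cost_altb_same (c : Bool) (n : ℕ) : cost c (altb c n) = n := by
  induction n generalizing c with
  | zero => rfl
  | succ n ih =>
    show cost c (c :: altb (!c) n) = n + 1
    simp only [cost, eq_self_iff_true, if_true, ih]
    omega

lemma cost_altb_flip (c : Bool) (n : ℕ) : cost c (altb (!c) (n+1)) = n + 2 := by
  show cost c ((!c) :: altb (!(!c)) n) = n + 2
  simp only [cost, Bool.not_not, cost_altb_same]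
  have : ¬ (!c) = c := by cases c <;> simp
  rw [if_neg this]
  omega

lemma sublist_len_pred (z w : List Bool) (h : z.Sublist w) (hl : z.length + 1 = w.length) :
    ∃ i, i < w.length ∧ z = w.eraseIdx i := by
  induction h with
  | slnil => simp at hl
  | cons b h ih =>
    rename_i z' w'
    have : z' = w' := h.eq_of_length (by simp at hl; omega)
    subst this
    exact ⟨0, by simp, rfl⟩
  | cons_cons b h ih =>
    rename_i z' w'
    obtain ⟨i, hi, hz⟩ := ih (by simpa using hl)
    exact ⟨i + 1, by simpa using hi, by simp [List.eraseIdx, hz]⟩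

lemma delBall_one_eq (w : List Bool) :
    delBall 1 w = ↑((Finset.range w.length).image w.eraseIdx) := by
  ext z
  simp only [delBall, Set.mem_setOf_eq, Finset.coe_image, Finset.coe_range, Set.mem_image,
    Set.mem_Iio]
  constructor
  · rintro ⟨hsub, hlen⟩
    obtain ⟨i, hi, hz⟩ := sublist_len_pred z w hsub (by omega)
    exact ⟨i, hi, hz.symm⟩
  · rintro ⟨i, hi, rfl⟩
    refine ⟨List.eraseIdx_sublist w i, ?_⟩
    rw [List.length_eraseIdx]
    simp only [if_pos hi]
    omega

lemma range_succ_image (n : ℕ) (f : ℕ → List Bool) :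
    (Finset.range (n+1)).image f = insert (f 0) ((Finset.range n).image (fun j => f (j+1))) := by
  ext z
  simp only [Finset.mem_image, Finset.mem_range, Finset.mem_insert]
  constructor
  · rintro ⟨i, hi, rfl⟩
    cases i with
    | zero => exact Or.inl rfl
    | succ j => exact Or.inr ⟨j, by omega, rfl⟩
  · rintro (rfl | ⟨j, hj, rfl⟩)
    · exact ⟨0, by omega, rfl⟩
    · exact ⟨j + 1, by omega, rfl⟩

lemma eqadj_le (w : List Bool) : eqadj w + 1 ≤ w.length ∨ w = [] := by
  induction w with
  | nil => exact Or.inr rfl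
  | cons b w ih =>
    left
    cases w with
    | nil => simp [eqadj]
    | cons a w =>
      rcases ih with ih | ih
      · simp only [eqadj, List.length_cons] at *
        split <;> omega
      · simp at ih

lemma card_image_eraseIdx (w : List Bool) :
    ((Finset.range w.length).image w.eraseIdx).card = w.length - eqadj w := by
  induction w with
  | nil => simp [eqadj]
  | cons b w ih =>
    have hw : (b :: w).length = w.length + 1 := rfl
    rw [hw, range_succ_image]
    have he0 : (b :: w).eraseIdx 0 = w := rfl
    have hesucc : (fun j => (b :: w).eraseIdx (j + 1)) = (fun j => b :: w.eraseIdx j) := by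
      funext j; rfl
    rw [he0, hesucc]
    have himg : (Finset.range w.length).image (fun j => b :: w.eraseIdx j)
        = ((Finset.range w.length).image w.eraseIdx).image (fun z => b :: z) := by
      rw [Finset.image_image]; rfl
    have hcard : ((Finset.range w.length).image (fun j => b :: w.eraseIdx j)).card
        = w.length - eqadj w := by
      rw [himg, Finset.card_image_of_injective _ (fun x y h => by injection h), ih]
    cases w with
    | nil => simp [eqadj]
    | cons a w' =>
      by_cases hab : a = b
      · subst hab
        have hmem : (a :: w') ∈ (Finset.range (a :: w').length).image
            (fun j => a :: (a :: w').eraseIdx j) := by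
          refine Finset.mem_image.2 ⟨0, by simp, rfl⟩
        rw [Finset.card_insert_of_mem hmem, hcard]
        simp only [eqadj, eq_self_iff_true, if_true]
        rcases eqadj_le (a :: w') with h | h
        · simp only [List.length_cons] at *; omega
        · simp at h
      · have hmem : (a :: w') ∉ (Finset.range (a :: w').length).image
            (fun j => b :: (a :: w').eraseIdx j) := by
          intro hmem
          obtain ⟨j, _, hj⟩ := Finset.mem_image.1 hmem
          exact hab (by injection hj.symm)
        rw [Finset.card_insert_of_notMem hmem, hcard]
        have : eqadj (b :: a :: w') = eqadj (a :: w') := by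
          simp only [eqadj, if_neg (fun h : b = a => hab h.symm)]
          omega
        rw [this]
        rcases eqadj_le (a :: w') with h | h
        · simp only [List.length_cons] at *; omega
        · simp at h

lemma eqadj_append : ∀ (p q : List Bool), p ≠ [] → q ≠ [] →
    eqadj (p ++ q) = eqadj p + eqadj q + (if p.getLastI = q.headI then 1 else 0)
  | [], _, hp, _ => by simp at hp
  | [a], b :: q, _, _ => by
    simp only [List.cons_append, List.nil_append, eqadj, List.getLastI, List.headI]
    by_cases h : a = b <;> simp [h] <;> omega
  | a :: c :: p, b :: q, _, hq => by
    have ih := eqadj_append (c :: p) (b :: q) (by simp) hq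
    simp only [List.cons_append] at *
    rw [show eqadj (a :: c :: (p ++ b :: q)) = (if a = c then 1 else 0) + eqadj (c :: (p ++ b :: q)) from rfl]
    rw [ih]
    rw [show eqadj (a :: c :: p) = (if a = c then 1 else 0) + eqadj (c :: p) from rfl]
    have : (a :: c :: p).getLastI = (c :: p).getLastI := by
      simp [List.getLastI_eq_getLast?, List.getLast?]
    rw [this]
    omega

lemma eqadj_altb (c : Bool) (n : ℕ) : eqadj (altb c n) = 0 := by
  induction n generalizing c with
  | zero => rfl
  | succ n ih =>
    cases n with
    | zero => rfl
    | succ m =>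
      show eqadj (c :: (!c) :: altb (!(!c)) m) = 0
      have : eqadj (c :: (!c) :: altb (!(!c)) m)
          = (if c = !c then 1 else 0) + eqadj ((!c) :: altb (!(!c)) m) := rfl
      rw [this, if_neg (by cases c <;> simp)]
      have := ih (!c)
      simpa [altb] using this

lemma getLastI_cons (b : Bool) (w : List Bool) (hw : w ≠ []) :
    (b :: w).getLastI = w.getLastI := by
  cases w with
  | nil => simp at hw
  | cons a w => simp [List.getLastI_eq_getLast?, List.getLast?]

lemma getLastI_altb_flip (c : Bool) (n : ℕ) :
    (altb (!c) (n+1)).getLastI = !(altb c (n+1)).getLastI := by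
  induction n generalizing c with
  | zero => rfl
  | succ n ih =>
    have h1 : altb c (n+2) = c :: altb (!c) (n+1) := rfl
    have h2 : altb (!c) (n+2) = (!c) :: altb (!(!c)) (n+1) := rfl
    rw [h1, h2, getLastI_cons _ _ (by simp [altb]), getLastI_cons _ _ (by simp [altb])]
    have := ih (!c)
    rw [Bool.not_not] at this ⊢
    exact this

lemma sub3 {p q r : List Bool} {P Q R : List Bool} (h1 : p.Sublist P) (h2 : q.Sublist Q)
    (h3 : r.Sublist R) : (p ++ (q ++ r)).Sublist (P ++ (Q ++ R)) :=
  h1.append (h2.append h3)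

lemma aux (d L s t : ℕ) (c1 c3 : Bool) (hL : d ≤ L)
    (z px qx rx py qy ry : List Bool)
    (hzx : z = px ++ (qx ++ rx)) (hzy : z = py ++ (qy ++ ry))
    (hpx : cost c1 px ≤ s) (hrx : cost c3 rx ≤ t)
    (hpy : cost c1 py ≤ s) (hry : cost c3 ry ≤ t)
    (hqx : cost qx.headI qx = L) (hqy : cost qy.headI qy = L)
    (hqxne : qx ≠ []) (hqyne : qy ≠ [])
    (hlt : px.length < py.length)
    (hlen : z.length + d = s + L + t) :
    ∃ b, z.Sublist (altb c1 s ++ (altb b (L-1) ++ altb c3 t)) := by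
  have hqxlen : qx.length ≤ L := by
    have := length_le_cost qx.headI qx; omega
  have hqylen : qy.length ≤ L := by
    have := length_le_cost qy.headI qy; omega
  by_cases hcase : py.length ≤ px.length + qx.length
  · -- overlapping case
    set k := py.length - px.length with hk
    have hk1 : 1 ≤ k := by omega
    have hkq : k ≤ qx.length := by omega
    have hsplit : z = (px ++ qx.take k) ++ (qx.drop k ++ rx) := by
      rw [hzx]
      rw [List.append_assoc, ← List.append_assoc (qx.take k), List.take_append_drop]
    have hinj := List.append_inj (hsplit.symm.trans hzy)
      (by simp [List.length_take]; omega)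
    have hpy2 : py = px ++ qx.take k := hinj.1.symm
    have hz2 : z = py ++ (qx.drop k ++ rx) := by rw [hpy2]; exact hsplit
    have hcost : cost (qx.drop k).headI (qx.drop k) + k ≤ L := by
      have h := cost_append_headI qx.headI (qx.take k) (qx.drop k)
      rw [List.take_append_drop] at h
      rw [hqx] at h
      simp [List.length_take] at h
      omega
    refine ⟨(qx.drop k).headI, ?_⟩
    rw [hz2]
    exact sub3 ((sublist_altb_iff _ _ _).2 hpy)
      ((sublist_altb_iff _ _ _).2 (by omega))
      ((sublist_altb_iff _ _ _).2 hrx)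
  · -- disjoint case: contradiction
    exfalso
    set k2 := py.length - px.length - qx.length with hk2
    have hk21 : 1 ≤ k2 := by omega
    have hpyz : py.length ≤ z.length := by rw [hzy]; simp
    have hk2rx : k2 ≤ rx.length := by
      rw [hzx] at hpyz; simp at hpyz; omega
    have hsplit : z = ((px ++ qx) ++ rx.take k2) ++ rx.drop k2 := by
      rw [hzx]; simp [List.take_append_drop]
    have hinj := List.append_inj (hsplit.symm.trans (by rw [hzy, ← List.append_assoc]))
      (by simp [List.length_take]; omega)
    have hpy2 : py = (px ++ qx) ++ rx.take k2 := hinj.1.symm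
    have hry2 : rx.drop k2 = qy ++ ry := hinj.2
    -- cost c1 py ≥ |px| + L + k2
    have h1 : px.length + (L + k2) ≤ cost c1 py := by
      have ha := cost_append_headI c1 px (qx ++ rx.take k2)
      rw [← List.append_assoc, ← hpy2] at ha
      have hb : (qx ++ rx.take k2).headI = qx.headI := headI_append _ _ hqxne
      have hc := cost_append_right qx.headI qx (rx.take k2)
      rw [hqx] at hc
      rw [hb] at ha
      have hd : (rx.take k2).length = k2 := by simp [List.length_take]; omega
      rw [hd] at hc
      omega
    -- cost c3 rx ≥ k2 + L + |ry|
    have h2 : k2 + (L + ry.length) ≤ cost c3 rx := by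
      have ha := cost_append_headI c3 (rx.take k2) (rx.drop k2)
      rw [List.take_append_drop] at ha
      rw [hry2] at ha
      have hb : (qy ++ ry).headI = qy.headI := headI_append _ _ hqyne
      have hc := cost_append_right qy.headI qy ry
      rw [hqy] at hc
      rw [hb] at ha
      have hd : (rx.take k2).length = k2 := by simp [List.length_take]; omega
      rw [hd] at ha
      omega
    have hzl : z.length = px.length + qx.length + rx.length := by rw [hzx]; simp; omega
    have hrxl : rx.length = k2 + qy.length + ry.length := by
      have : (rx.drop k2).length = qy.length + ry.length := by rw [hry2]; simp
      simp [List.length_drop] at this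
      omega
    omega

lemma split_three (z : List Bool) (c1 c2 c3 : Bool) (s L t : ℕ)
    (h : z.Sublist (altb c1 s ++ (altb c2 L ++ altb c3 t))) :
    ∃ p q r, z = p ++ (q ++ r) ∧ cost c1 p ≤ s ∧ cost c2 q ≤ L ∧ cost c3 r ≤ t := by
  rw [List.sublist_append_iff] at h
  obtain ⟨p, w, hz, hp, hw⟩ := h
  rw [List.sublist_append_iff] at hw
  obtain ⟨q, r, hw2, hq, hr⟩ := hw
  exact ⟨p, q, r, by rw [hz, hw2], (sublist_altb_iff _ _ _).1 hp,
    (sublist_altb_iff _ _ _).1 hq, (sublist_altb_iff _ _ _).1 hr⟩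

lemma main (d L s t : ℕ) (c1 c2 c3 : Bool) (hd : 1 ≤ d) (hL : d ≤ L)
    (z : List Bool)
    (h1 : z.Sublist (altb c1 s ++ (altb c2 L ++ altb c3 t)))
    (h2 : z.Sublist (altb c1 s ++ (altb (!c2) L ++ altb c3 t)))
    (hlen : z.length + d = s + L + t) :
    ∃ b, z.Sublist (altb c1 s ++ (altb b (L-1) ++ altb c3 t)) := by
  obtain ⟨px, qx, rx, hzx, hpx, hqx, hrx⟩ := split_three z c1 c2 c3 s L t h1
  obtain ⟨py, qy, ry, hzy, hpy, hqy, hry⟩ := split_three z c1 (!c2) c3 s L t h2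
  by_cases hx : cost qx.headI qx ≤ L - 1
  · refine ⟨qx.headI, ?_⟩
    rw [hzx]
    exact sub3 ((sublist_altb_iff _ _ _).2 hpx) ((sublist_altb_iff _ _ _).2 hx)
      ((sublist_altb_iff _ _ _).2 hrx)
  by_cases hy : cost qy.headI qy ≤ L - 1
  · refine ⟨qy.headI, ?_⟩
    rw [hzy]
    exact sub3 ((sublist_altb_iff _ _ _).2 hpy) ((sublist_altb_iff _ _ _).2 hy)
      ((sublist_altb_iff _ _ _).2 hry)
  have hxL : cost qx.headI qx = L := by
    have := cost_headI_le c2 qx; omega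
  have hyL : cost qy.headI qy = L := by
    have := cost_headI_le (!c2) qy; omega
  have hqxne : qx ≠ [] := by
    intro h; rw [h] at hxL; simp [cost] at hxL; omega
  have hqyne : qy ≠ [] := by
    intro h; rw [h] at hyL; simp [cost] at hyL; omega
  have hxhead : qx.headI = c2 := by
    have := cost_eq_headI c2 qx hqxne
    by_cases h : qx.headI = c2
    · exact h
    · rw [if_neg h] at this; omega
  have hyhead : qy.headI = !c2 := by
    have := cost_eq_headI (!c2) qy hqyne
    by_cases h : qy.headI = !c2
    · exact h
    · rw [if_neg h] at this; omega
  have hne : px.length ≠ py.length := by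
    intro h
    have hinj := List.append_inj (hzx.symm.trans hzy) h
    have h1' : (qx ++ rx).headI = (qy ++ ry).headI := by rw [hinj.2]
    rw [headI_append _ _ hqxne, headI_append _ _ hqyne, hxhead, hyhead] at h1'
    cases c2 <;> simp at h1'
  rcases Nat.lt_or_ge px.length py.length with hlt | hge
  · exact aux d L s t c1 c3 hL z px qx rx py qy ry hzx hzy hpx hrx hpy hry hxL hyL
      hqxne hqyne hlt hlen
  · exact aux d L s t c1 c3 hL z py qy ry px qx rx hzy hzx hpy hry hpx hrx hyL hxL
      hqyne hqxne (by omega) hlen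

lemma cost_altb_le (c b : Bool) (m : ℕ) : cost c (altb b m) ≤ m + 1 := by
  by_cases h : b = c
  · subst h; rw [cost_altb_same]; omega
  · have hb : b = !c := by cases b <;> cases c <;> simp_all
    subst hb
    cases m with
    | zero => simp [altb, cost]
    | succ k => rw [cost_altb_flip]

lemma altb_ne_nil (c : Bool) (n : ℕ) (h : 1 ≤ n) : altb c n ≠ [] := by
  cases n with
  | zero => omega
  | succ k => simp [altb]

lemma headI_altb' (c : Bool) (n : ℕ) (h : 1 ≤ n) : (altb c n).headI = c := by
  cases n with
  | zero => omega
  | succ k => rfl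

lemma eqadj_W (c1 c3 b : Bool) (s m t : ℕ) (hs : 1 ≤ s) (hm : 1 ≤ m) (ht : 1 ≤ t) :
    eqadj (altb c1 s ++ (altb b m ++ altb c3 t)) =
      (if (altb c1 s).getLastI = b then 1 else 0) +
      (if (altb b m).getLastI = c3 then 1 else 0) := by
  have h1 : altb c1 s ≠ [] := altb_ne_nil _ _ hs
  have h2 : altb b m ≠ [] := altb_ne_nil _ _ hm
  have h3 : altb c3 t ≠ [] := altb_ne_nil _ _ ht
  have h23 : altb b m ++ altb c3 t ≠ [] := by
    intro h; exact h2 (List.append_eq_nil_iff.1 h).1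
  rw [eqadj_append _ _ h1 h23, eqadj_append _ _ h2 h3, headI_append _ _ h2,
    eqadj_altb, eqadj_altb, eqadj_altb, headI_altb' _ _ hm, headI_altb' _ _ ht]
  omega

lemma key (s l t n : ℕ) (c1 c2 c3 : Bool) (hn : s + l + t = n) (hn7 : 7 ≤ n)
    (hl3 : 3 ≤ l) (hs1 : 1 ≤ s) (ht1 : 1 ≤ t) :
    (delBall 2 (altb c1 s ++ (altb c2 l ++ altb c3 t)) ∩
     delBall 2 (altb c1 s ++ (altb (!c2) l ++ altb c3 t))).ncard = 2 * n - 6 := by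
  classical
  set W : Bool → List Bool := fun b => altb c1 s ++ (altb b (l-1) ++ altb c3 t) with hW
  set V : Bool → List Bool := fun b => altb c1 s ++ (altb b (l-2) ++ altb c3 t) with hV
  have hWlen : ∀ b, (W b).length = s + (l-1) + t := by
    intro b; simp [hW]; omega
  have hVlen : ∀ b, (V b).length = s + (l-2) + t := by
    intro b; simp [hV]; omega
  have hWsub : ∀ b c2', (W b).Sublist (altb c1 s ++ (altb c2' l ++ altb c3 t)) := by
    intro b c2'
    refine sub3 (List.Sublist.refl _) ((sublist_altb_iff _ _ _).2 ?_) (List.Sublist.refl _)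
    have := cost_altb_le c2' b (l-1); omega
  have hVsubW : ∀ b b', (V b).Sublist (W b') := by
    intro b b'
    refine sub3 (List.Sublist.refl _) ((sublist_altb_iff _ _ _).2 ?_) (List.Sublist.refl _)
    have := cost_altb_le b' b (l-2); omega
  -- Step 1
  have hstep1 : delBall 2 (altb c1 s ++ (altb c2 l ++ altb c3 t)) ∩
      delBall 2 (altb c1 s ++ (altb (!c2) l ++ altb c3 t))
      = delBall 1 (W true) ∪ delBall 1 (W false) := by
    ext z
    simp only [delBall, Set.mem_inter_iff, Set.mem_setOf_eq, Set.mem_union]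
    constructor
    · rintro ⟨⟨hzx, hlx⟩, ⟨hzy, _⟩⟩
      simp only [List.length_append, length_altb] at hlx
      have hlz : z.length + 2 = s + l + t := by omega
      obtain ⟨b, hb⟩ := main 2 l s t c1 c2 c3 (by omega) (by omega) z hzx hzy hlz
      cases b
      · exact Or.inr ⟨hb, by rw [hWlen false]; omega⟩
      · exact Or.inl ⟨hb, by rw [hWlen true]; omega⟩
    · rintro (⟨hzw, hlw⟩ | ⟨hzw, hlw⟩) <;>
      · rw [hWlen _] at hlw
        refine ⟨⟨hzw.trans (hWsub _ c2), ?_⟩, ⟨hzw.trans (hWsub _ (!c2)), ?_⟩⟩ <;>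
          · simp only [List.length_append, length_altb]; omega
  -- Step 2
  have hstep2 : delBall 1 (W true) ∩ delBall 1 (W false) = {V true, V false} := by
    ext z
    simp only [delBall, Set.mem_inter_iff, Set.mem_setOf_eq, Set.mem_insert_iff,
      Set.mem_singleton_iff]
    constructor
    · rintro ⟨⟨hz1, hl1⟩, ⟨hz2, _⟩⟩
      rw [hWlen true] at hl1
      have hlz : z.length + 1 = s + (l-1) + t := by omega
      obtain ⟨b, hb⟩ := main 1 (l-1) s t c1 true c3 le_rfl (by omega) z hz1 hz2 hlz
      have hll : l - 1 - 1 = l - 2 := by omega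
      rw [hll] at hb
      have hzV : z = V b := hb.eq_of_length (by rw [hVlen b]; omega)
      cases b
      · exact Or.inr hzV
      · exact Or.inl hzV
    · rintro (rfl | rfl) <;>
        exact ⟨⟨hVsubW _ _, by rw [hVlen, hWlen]; omega⟩,
               ⟨hVsubW _ _, by rw [hVlen, hWlen]; omega⟩⟩
  -- cardinalities
  have hAcard : ∀ b, (delBall 1 (W b)).ncard = (s + (l-1) + t) - eqadj (W b) := by
    intro b
    rw [delBall_one_eq, Set.ncard_coe_finset, card_image_eraseIdx, hWlen]
  have hAfin : ∀ b, (delBall 1 (W b)).Finite := by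
    intro b; rw [delBall_one_eq]; exact (Finset.finite_toSet _)
  -- eqadj values
  have hlm : 1 ≤ l - 1 := by omega
  have hE : ∀ b, eqadj (W b) = (if (altb c1 s).getLastI = b then 1 else 0) +
      (if (altb b (l-1)).getLastI = c3 then 1 else 0) := by
    intro b; rw [hW]; exact eqadj_W c1 c3 b s (l-1) t hs1 hlm ht1
  have hflip : (altb false (l-1)).getLastI = !(altb true (l-1)).getLastI := by
    obtain ⟨k, hk⟩ : ∃ k, l - 1 = k + 1 := ⟨l - 2, by omega⟩
    rw [hk]
    exact getLastI_altb_flip true k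
  have hEsum : eqadj (W true) + eqadj (W false) = 2 := by
    rw [hE true, hE false, hflip]
    cases h1 : (altb c1 s).getLastI <;> cases h2 : (altb true (l-1)).getLastI <;>
      cases c3 <;> simp
  have hElt : eqadj (W true) ≤ 2 ∧ eqadj (W false) ≤ 2 := by
    constructor <;> · rw [hE] ; split <;> split <;> omega
  -- V true ≠ V false
  have hhead : ∀ b, ((V b).drop s).headI = b := by
    intro b
    have hdrop : (V b).drop s = altb b (l-2) ++ altb c3 t := by
      rw [show (V b) = altb c1 s ++ (altb b (l-2) ++ altb c3 t) from rfl,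
          List.drop_left' (length_altb c1 s)]
    rw [hdrop, headI_append _ _ (altb_ne_nil b (l-2) (by omega)),
        headI_altb' _ _ (by omega)]
  have hVne : V true ≠ V false := by
    intro h
    have h2 : true = false := by rw [← hhead true, ← hhead false, h]
    simp at h2
  have hIcard : ({V true, V false} : Set (List Bool)).ncard = 2 := Set.ncard_pair hVne
  -- inclusion-exclusion
  have hIE := Set.ncard_union_add_ncard_inter (delBall 1 (W true)) (delBall 1 (W false))
    (hAfin true) (hAfin false)
  rw [hstep2, hIcard, hAcard true, hAcard false] at hIE
  rw [hstep1]
  omega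
end S14

open S14 in
/-- If `x = u ++ a ++ v` and `y = u ++ ā ++ v` with `u, a, v` alternating,
`n = s + l + t ≥ 7`, `3 ≤ l ≤ n - 2`, `s ≥ 1`, `t ≥ 1`, then the two-deletion balls
of `x` and `y` intersect in exactly `2n - 6` sequences. -/
theorem stmt14 (n l s t : ℕ) (u a v : List Bool)
    (hu : List.Chain' (· ≠ ·) u) (ha : List.Chain' (· ≠ ·) a)
    (hv : List.Chain' (· ≠ ·) v)
    (hs : u.length = s) (hl : a.length = l) (ht : v.length = t)
    (hn : s + l + t = n) (hn7 : 7 ≤ n)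
    (hl3 : 3 ≤ l) (hln : l ≤ n - 2) (hs1 : 1 ≤ s) (ht1 : 1 ≤ t) :
    (delBall 2 (u ++ a ++ v) ∩ delBall 2 (u ++ compl' a ++ v)).ncard
      = 2 * n - 6 := by
  obtain ⟨c1, hc1⟩ : ∃ c1, u = altb c1 s :=
    ⟨u.headI, by rw [← hs]; exact chain'_eq_altb u hu⟩
  obtain ⟨c2, hc2⟩ : ∃ c2, a = altb c2 l :=
    ⟨a.headI, by rw [← hl]; exact chain'_eq_altb a ha⟩
  obtain ⟨c3, hc3⟩ : ∃ c3, v = altb c3 t :=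
    ⟨v.headI, by rw [← ht]; exact chain'_eq_altb v hv⟩
  rw [hc1, hc2, hc3, compl'_altb]
  simp only [List.append_assoc]
  exact key s l t n c1 c2 c3 hn hn7 hl3 hs1 ht1
end

section
/- For n ≥ 13 odd, let x = 1 0 1 0 1 0 ∘ a_{n−8} ∘ 1 0 and y = 0 1 1 0 0 1 ∘ a_{n−8} ∘ 0 1, where a_{n−8} is the alternating sequence of length n−8 starting with 1. Then the Levenshtein distance d_L(x,y) equals 3. -/
/- ### Auxiliary lemmas -/
open List

lemma altSeq_length (n : ℕ) : (altSeq n).length = n := by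
  simp [altSeq]

lemma altSeq_succ (n : ℕ) :
    altSeq (n + 1) = altSeq n ++ [decide (n % 2 = 0)] := by
  simp [altSeq, List.range_succ]

lemma altSeq_cons (n : ℕ) : altSeq (n + 2) = true :: false :: altSeq n := by
  have h : n + 2 = 2 + n := by omega
  rw [h]
  show (List.range (2 + n)).map (fun k => decide (k % 2 = 0)) = _
  rw [List.range_add, List.map_append, List.map_map]
  have : (List.range n).map ((fun k => decide (k % 2 = 0)) ∘ (fun x => 2 + x))
      = (List.range n).map (fun k => decide (k % 2 = 0)) := by
    apply List.map_congr_left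
    intro a _
    simp [Function.comp, Nat.add_mod_left]
  rw [this]
  rfl

lemma altSeq_snoc (k : ℕ) :
    altSeq (2 * k + 1 + 2) = altSeq (2 * k + 1) ++ [false, true] := by
  have h1 : 2 * k + 1 + 2 = (2 * k + 2) + 1 := by omega
  have h2 : 2 * k + 2 = (2 * k + 1) + 1 := by omega
  have e1 : (2 * k + 1) % 2 = 1 := by omega
  have e2 : (2 * k + 2) % 2 = 0 := by omega
  rw [h1, altSeq_succ, h2, altSeq_succ, e2, e1]
  simp

lemma altSeq_reverse (k : ℕ) : (altSeq (2 * k + 1)).reverse = altSeq (2 * k + 1) := by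
  induction k with
  | zero => rfl
  | succ k ih =>
    have h : 2 * (k + 1) + 1 = 2 * k + 1 + 2 := by omega
    rw [h, altSeq_snoc, List.reverse_append, ih]
    show true :: false :: altSeq (2 * k + 1) = altSeq (2 * k + 1) ++ [false, true]
    rw [← altSeq_cons, ← altSeq_snoc]

/-- Inversion for sublists of a cons. -/
lemma sublist_cons_elim {α : Type*} {v : List α} {a : α} {L : List α}
    (h : v <+ a :: L) : v <+ L ∨ ∃ v', v = a :: v' ∧ v' <+ L := by
  cases h with
  | cons _ h' => exact Or.inl h'
  | cons_cons _ h' => exact Or.inr ⟨_, rfl, h'⟩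

/-- If heads differ, the head of the larger list can be skipped. -/
lemma sublist_skip {α : Type*} {a b : α} {l L : List α}
    (h : a :: l <+ b :: L) (hne : a ≠ b) : a :: l <+ L := by
  cases h with
  | cons _ h' => exact h'
  | cons_cons _ h' => exact absurd rfl hne

lemma core1 {u w : List Bool}
    (h : true :: false :: u <+ false :: true :: true :: false :: w) : u <+ w := by
  have h1 := sublist_skip h (by decide)
  have h2 := List.cons_sublist_cons.mp h1
  have h3 := sublist_skip h2 (by decide)
  exact List.cons_sublist_cons.mp h3

lemma core2 {u w : List Bool}
    (h : true :: false :: u <+ false :: true :: true :: false :: false :: true :: w) :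
    u <+ false :: true :: w := by
  have h1 := sublist_skip h (by decide)
  have h2 := List.cons_sublist_cons.mp h1
  have h3 := sublist_skip h2 (by decide)
  exact List.cons_sublist_cons.mp h3

/-- Reserving the last two symbols of an odd alternating sequence. -/
lemma snoc_sub_alt {u : List Bool} {k : ℕ}
    (h : u ++ [false, true] <+ altSeq (2 * k + 3)) : u <+ altSeq (2 * k + 1) := by
  have h3 : 2 * k + 3 = 2 * (k + 1) + 1 := by omega
  have hr := h.reverse
  rw [List.reverse_append, h3, altSeq_reverse (k + 1)] at hr
  have h4 : 2 * (k + 1) + 1 = 2 * k + 1 + 2 := by omega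
  rw [h4, altSeq_cons] at hr
  have hr' : true :: false :: u.reverse <+ true :: false :: altSeq (2 * k + 1) := hr
  have h5 := List.cons_sublist_cons.mp (List.cons_sublist_cons.mp hr')
  have := h5.reverse
  rwa [List.reverse_reverse, altSeq_reverse] at this

/-- Reserving positions for `[0,1]` at the end of `altSeq (2k+3) ++ [1,0]`. -/
lemma snoc_sub_alt' {u : List Bool} {k : ℕ}
    (h : u ++ [false, true] <+ altSeq (2 * k + 3) ++ [true, false]) :
    u <+ altSeq (2 * k + 1) := by
  have h3 : 2 * k + 3 = 2 * (k + 1) + 1 := by omega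
  have hr := h.reverse
  rw [List.reverse_append, List.reverse_append, h3, altSeq_reverse (k + 1)] at hr
  have h4 : 2 * (k + 1) + 1 = 2 * k + 1 + 2 := by omega
  rw [h4, altSeq_cons] at hr
  have hr' : true :: false :: u.reverse <+
      false :: true :: true :: false :: altSeq (2 * k + 1) := hr
  have h5 := core1 hr'
  have := h5.reverse
  rwa [List.reverse_reverse, altSeq_reverse] at this


/-- All binary lists of a given length. -/
def binLists : ℕ → List (List Bool)
  | 0 => [[]]
  | n + 1 => (binLists n).flatMap (fun l => [true :: l, false :: l])

lemma mem_binLists : ∀ (n : ℕ) (l : List Bool), l.length = n → l ∈ binLists n := by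
  intro n
  induction n with
  | zero => intro l hl; simp at hl; simp [hl, binLists]
  | succ n ih =>
    intro l hl
    cases l with
    | nil => simp at hl
    | cons b t =>
      simp only [List.length_cons] at hl
      have ht := ih t (by omega)
      simp only [binLists, List.mem_flatMap]
      exact ⟨t, ht, by cases b <;> simp⟩

/-- The sequence `x` as a function of the middle length. -/
def XL (m : ℕ) : List Bool :=
  [true, false, true, false, true, false] ++ altSeq m ++ [true, false]

/-- The sequence `y` as a function of the middle length. -/
def YL (m : ℕ) : List Bool :=
  [false, true, true, false, false, true] ++ altSeq m ++ [false, true]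

lemma XL_cons (k : ℕ) : XL (2 * k + 3) = true :: false :: XL (2 * k + 1) := by
  unfold XL
  rw [show 2 * k + 3 = (2 * k + 1) + 2 by omega, altSeq_cons]
  simp

lemma YL_snoc (k : ℕ) : YL (2 * k + 3) = YL (2 * k + 1) ++ [false, true] := by
  unfold YL
  rw [show 2 * k + 3 = 2 * k + 1 + 2 by omega, altSeq_snoc k]
  simp

lemma XL_alt (k : ℕ) : XL (2 * k + 1) = altSeq (2 * k + 7) ++ [true, false] := by
  unfold XL
  rw [show 2 * k + 7 = (2 * k + 5) + 2 by omega, altSeq_cons,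
      show 2 * k + 5 = (2 * k + 3) + 2 by omega, altSeq_cons,
      show 2 * k + 3 = (2 * k + 1) + 2 by omega, altSeq_cons]
  simp

lemma YL_shape (m : ℕ) :
    YL m = false :: true :: true :: false :: false :: true :: (altSeq m ++ [false, true]) := rfl

/-- Splitting a sublist of a two-fold cons. -/
lemma sublist_two_cons {α : Type*} {v : List α} {a b : α} {L : List α}
    (h : v <+ a :: b :: L) :
    v <+ L ∨ (∃ v₁, (v = [a] ++ v₁ ∨ v = [b] ++ v₁) ∧ v₁ <+ L) ∨
      (∃ v₁, v = [a, b] ++ v₁ ∧ v₁ <+ L) := by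
  rcases sublist_cons_elim h with h' | ⟨v₁, rfl, h'⟩
  · rcases sublist_cons_elim h' with h'' | ⟨v₂, rfl, h''⟩
    · exact Or.inl h''
    · exact Or.inr (Or.inl ⟨v₂, Or.inr rfl, h''⟩)
  · rcases sublist_cons_elim h' with h'' | ⟨v₂, rfl, h''⟩
    · exact Or.inr (Or.inl ⟨v₁, Or.inl rfl, h''⟩)
    · exact Or.inr (Or.inr ⟨v₂, rfl, h''⟩)

/-- The auxiliary inductive statement `R`. -/
def Rst (k : ℕ) : Prop :=
  ∀ v : List Bool, v <+ altSeq (2 * k + 5) →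
    v <+ false :: true :: altSeq (2 * k + 3) → v.length ≤ 2 * k + 4

/-- The main inductive statement `P`. -/
def Pst (k : ℕ) : Prop :=
  ∀ v : List Bool, v <+ XL (2 * k + 3) → v <+ YL (2 * k + 3) → v.length ≤ 2 * k + 8

set_option maxRecDepth 2000 in
lemma R_base : Rst 0 := by
  intro v h1 h2
  by_contra hlt
  push_neg at hlt
  have h5 : (v.take 5).length = 5 := by
    rw [List.length_take]; omega
  have hm := mem_binLists 5 (v.take 5) h5
  have hx : v.take 5 <+ ([true, false, true, false, true] : List Bool) :=
    (List.take_sublist 5 v).trans h1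
  have hy : v.take 5 <+ ([false, true, true, false, true] : List Bool) :=
    (List.take_sublist 5 v).trans h2
  have key : ∀ u ∈ binLists 5,
      ¬(u <+ ([true, false, true, false, true] : List Bool) ∧
        u <+ ([false, true, true, false, true] : List Bool)) := by decide
  exact key _ hm ⟨hx, hy⟩

set_option maxRecDepth 10000 in
lemma P_base : Pst 0 := by
  intro v h1 h2
  by_contra hlt
  push_neg at hlt
  have h9 : (v.take 9).length = 9 := by
    rw [List.length_take]; omega
  have hm := mem_binLists 9 (v.take 9) h9
  have hx : v.take 9 <+
      ([true, false, true, false, true, false, true, false, true, true, false] : List Bool) :=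
    (List.take_sublist 9 v).trans h1
  have hy : v.take 9 <+
      ([false, true, true, false, false, true, true, false, true, false, true] : List Bool) :=
    (List.take_sublist 9 v).trans h2
  have key : ∀ u ∈ binLists 9,
      ¬(u <+ ([true, false, true, false, true, false, true, false, true, true, false] : List Bool) ∧
        u <+ ([false, true, true, false, false, true, true, false, true, false, true] : List Bool)) := by
    decide
  exact key _ hm ⟨hx, hy⟩

lemma R_step (k : ℕ) (ih : Rst k) : Rst (k + 1) := by
  intro v h1 h2
  rw [show 2 * (k + 1) + 4 = 2 * k + 6 by omega]
  rw [show 2 * (k + 1) + 5 = 2 * k + 5 + 2 by omega, altSeq_cons] at h1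
  have h2' : v <+ (false :: true :: altSeq (2 * k + 3)) ++ [false, true] := by
    rw [show 2 * (k + 1) + 3 = 2 * (k + 1) + 1 + 2 by omega, altSeq_snoc (k + 1),
        show 2 * (k + 1) + 1 = 2 * k + 3 by omega] at h2
    exact h2
  obtain ⟨q, s, hv2, hq, hs⟩ := List.sublist_append_iff.mp h2'
  have hlenv : v.length = q.length + s.length := by rw [hv2]; exact List.length_append
  have hs2 : s.length ≤ 2 := by simpa using hs.length_le
  rcases sublist_two_cons h1 with hA | ⟨v₁, hp, hA⟩ | ⟨v₁, hp, hA⟩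
  · -- nothing of the peeled prefix is used
    have hqv : q <+ v := hv2 ▸ List.sublist_append_left q s
    have := ih q (hqv.trans hA) hq
    omega
  · -- one symbol of the peeled prefix is used
    have hp' : ∃ c, v = [c] ++ v₁ := by
      rcases hp with hp | hp
      · exact ⟨_, hp⟩
      · exact ⟨_, hp⟩
    obtain ⟨c, hp⟩ := hp'
    have hlenv1 : v.length = 1 + v₁.length := by rw [hp]; simp; omega
    rcases List.append_eq_append_iff.mp (hp.symm.trans hv2) with ⟨w, hqw, hv1w⟩ |
      ⟨c', hpc, hsc⟩
    · have hlenq : q.length = 1 + w.length := by rw [hqw]; simp; omega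
      by_cases hscase : s.length ≤ 1
      · have hwX : w <+ altSeq (2 * k + 5) := by
          rw [hv1w] at hA
          exact (List.sublist_append_left w s).trans hA
        have hwY : w <+ false :: true :: altSeq (2 * k + 3) := by
          rw [hqw] at hq
          exact (List.sublist_append_right [c] w).trans hq
        have := ih w hwX hwY
        omega
      · have hseq : s = [false, true] := hs.eq_of_length (by simp only [List.length_cons, List.length_nil]; omega)
        rw [hseq] at hv1w
        rw [hv1w] at hA
        have hA' : w ++ [false, true] <+ altSeq (2 * (k + 1) + 3) := by
          rw [show 2 * (k + 1) + 3 = 2 * k + 5 by omega]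
          exact hA
        have hw := snoc_sub_alt hA'
        have hwl : w.length ≤ 2 * (k + 1) + 1 := by
          have := hw.length_le
          rwa [altSeq_length] at this
        have : v₁.length = w.length + 2 := by rw [hv1w]; simp
        omega
    · have hql : q.length ≤ 1 := by
        have := congrArg List.length hpc
        simp at this
        omega
      omega
  · -- both peeled symbols are used: v = [true, false] ++ v₁
    have hlenv1 : v.length = 2 + v₁.length := by rw [hp]; simp; omega
    rcases List.append_eq_append_iff.mp (hp.symm.trans hv2) with ⟨w, hqw, hv1w⟩ |
      ⟨c', hpc, hsc⟩
    · have hlenq : q.length = 2 + w.length := by rw [hqw]; simp; omega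
      rw [hqw, show 2 * k + 3 = (2 * k + 1) + 2 by omega, altSeq_cons] at hq
      have hw := core1 hq
      have hwl : w.length ≤ 2 * k + 1 := by
        have := hw.length_le
        rwa [altSeq_length] at this
      omega
    · have hql : q.length ≤ 2 := by
        have := congrArg List.length hpc
        simp at this
        omega
      omega

lemma P_step (k : ℕ) (ihP : Pst k) (ihR : Rst (k + 1)) : Pst (k + 1) := by
  intro v h1 h2
  rw [show 2 * (k + 1) + 8 = 2 * k + 10 by omega]
  rw [XL_cons (k + 1), show 2 * (k + 1) + 1 = 2 * k + 3 by omega] at h1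
  rw [YL_snoc (k + 1), show 2 * (k + 1) + 1 = 2 * k + 3 by omega] at h2
  obtain ⟨q, s, hv2, hq, hs⟩ := List.sublist_append_iff.mp h2
  have hlenv : v.length = q.length + s.length := by rw [hv2]; exact List.length_append
  have hs2 : s.length ≤ 2 := by simpa using hs.length_le
  have hXalt : XL (2 * k + 3) = altSeq (2 * k + 9) ++ [true, false] := by
    have := XL_alt (k + 1)
    rw [show 2 * (k + 1) + 1 = 2 * k + 3 by omega, show 2 * (k + 1) + 7 = 2 * k + 9 by omega]
      at this
    exact this
  rcases sublist_two_cons h1 with hA | ⟨v₁, hp, hA⟩ | ⟨v₁, hp, hA⟩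
  · have hqv : q <+ v := hv2 ▸ List.sublist_append_left q s
    have := ihP q (hqv.trans hA) hq
    omega
  · have hp' : ∃ c, v = [c] ++ v₁ := by
      rcases hp with hp | hp
      · exact ⟨_, hp⟩
      · exact ⟨_, hp⟩
    obtain ⟨c, hp⟩ := hp'
    have hlenv1 : v.length = 1 + v₁.length := by rw [hp]; simp; omega
    rcases List.append_eq_append_iff.mp (hp.symm.trans hv2) with ⟨w, hqw, hv1w⟩ |
      ⟨c', hpc, hsc⟩
    · have hlenq : q.length = 1 + w.length := by rw [hqw]; simp; omega
      by_cases hscase : s.length ≤ 1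
      · have hwX : w <+ XL (2 * k + 3) := by
          rw [hv1w] at hA
          exact (List.sublist_append_left w s).trans hA
        have hwY : w <+ YL (2 * k + 3) := by
          rw [hqw] at hq
          exact (List.sublist_append_right [c] w).trans hq
        have := ihP w hwX hwY
        omega
      · have hseq : s = [false, true] := hs.eq_of_length (by simp only [List.length_cons, List.length_nil]; omega)
        rw [hseq] at hv1w
        rw [hv1w, hXalt] at hA
        have hA' : w ++ [false, true] <+ altSeq (2 * (k + 3) + 3) ++ [true, false] := by
          rw [show 2 * (k + 3) + 3 = 2 * k + 9 by omega]
          exact hA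
        have hw := snoc_sub_alt' hA'
        have hwl : w.length ≤ 2 * (k + 3) + 1 := by
          have := hw.length_le
          rwa [altSeq_length] at this
        have : v₁.length = w.length + 2 := by rw [hv1w]; simp
        omega
    · have hql : q.length ≤ 1 := by
        have := congrArg List.length hpc
        simp at this
        omega
      omega
  · -- v = [true, false] ++ v₁
    have hlenv1 : v.length = 2 + v₁.length := by rw [hp]; simp; omega
    rcases List.append_eq_append_iff.mp (hp.symm.trans hv2) with ⟨w, hqw, hv1w⟩ |
      ⟨c', hpc, hsc⟩
    · have hlenq : q.length = 2 + w.length := by rw [hqw]; simp; omega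
      rw [hqw, YL_shape] at hq
      have hw := core2 hq
      have hwY : w <+ false :: true :: altSeq (2 * k + 5) := by
        have he : altSeq (2 * k + 3) ++ [false, true] = altSeq (2 * k + 5) := by
          rw [show 2 * k + 5 = 2 * (k + 1) + 1 + 2 by omega, altSeq_snoc (k + 1),
              show 2 * (k + 1) + 1 = 2 * k + 3 by omega]
        rwa [he] at hw
      by_cases hscase : s.length ≤ 1
      · have hwl : w.length ≤ 2 * k + 7 := by
          have := hwY.length_le
          simp only [List.length_cons, altSeq_length] at this
          omega
        omega
      · have hseq : s = [false, true] := hs.eq_of_length (by simp only [List.length_cons, List.length_nil]; omega)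
        rw [hseq] at hv1w
        rw [hv1w, hXalt] at hA
        have hA' : w ++ [false, true] <+ altSeq (2 * (k + 3) + 3) ++ [true, false] := by
          rw [show 2 * (k + 3) + 3 = 2 * k + 9 by omega]
          exact hA
        have hw' := snoc_sub_alt' hA'
        have hwX : w <+ altSeq (2 * (k + 1) + 5) := by
          rw [show 2 * (k + 1) + 5 = 2 * (k + 3) + 1 by omega]
          exact hw'
        have hwY' : w <+ false :: true :: altSeq (2 * (k + 1) + 3) := by
          rw [show 2 * (k + 1) + 3 = 2 * k + 5 by omega]
          exact hwY
        have := ihR w hwX hwY'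
        have : v₁.length = w.length + 2 := by rw [hv1w]; simp
        omega
    · have hql : q.length ≤ 2 := by
        have := congrArg List.length hpc
        simp at this
        omega
      omega

lemma R_all (k : ℕ) : Rst k := by
  induction k with
  | zero => exact R_base
  | succ k ih => exact R_step k ih

lemma P_all (k : ℕ) : Pst k := by
  induction k with
  | zero => exact P_base
  | succ k ih => exact P_step k ih (R_all (k + 1))

lemma XL_length (m : ℕ) : (XL m).length = m + 8 := by
  simp [XL, altSeq_length]

lemma YL_length (m : ℕ) : (YL m).length = m + 8 := by
  simp [YL, altSeq_length]

lemma witness_X (k : ℕ) :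
    [true, false, true] ++ altSeq (2 * k + 3) ++ [false, true] <+ XL (2 * k + 3) := by
  have hz : [true, false, true] ++ altSeq (2 * k + 3) ++ [false, true]
      = [true, false, true] ++ altSeq (2 * k + 5) := by
    rw [show 2 * k + 5 = 2 * (k + 1) + 1 + 2 by omega, altSeq_snoc (k + 1),
        show 2 * (k + 1) + 1 = 2 * k + 3 by omega, List.append_assoc]
  have hX : XL (2 * k + 3) = ([true, false, true, false] ++ altSeq (2 * k + 5)) ++ [true, false] := by
    have h := altSeq_cons (2 * k + 3)
    unfold XL
    rw [show 2 * k + 5 = 2 * k + 3 + 2 by omega, h]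
    simp
  rw [hz, hX]
  refine (List.Sublist.append ?_ (List.Sublist.refl _)).trans
    (List.sublist_append_left _ _)
  decide

lemma witness_Y (k : ℕ) :
    [true, false, true] ++ altSeq (2 * k + 3) ++ [false, true] <+ YL (2 * k + 3) := by
  unfold YL
  have h : ([true, false, true] : List Bool) <+ [false, true, true, false, false, true] := by
    decide
  exact List.Sublist.append (List.Sublist.append h (List.Sublist.refl _)) (List.Sublist.refl _)

theorem stmt16' (k : ℕ) : levDist (XL (2 * k + 3)) (YL (2 * k + 3)) = 3 := by
  have hmem : 3 ∈ {r | ((delBall r (XL (2 * k + 3))) ∩ (delBall r (YL (2 * k + 3)))).Nonempty} := by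
    refine ⟨[true, false, true] ++ altSeq (2 * k + 3) ++ [false, true],
      ⟨witness_X k, ?_⟩, ⟨witness_Y k, ?_⟩⟩
    · rw [XL_length]; simp [altSeq_length]
    · rw [YL_length]; simp [altSeq_length]
  apply _root_.le_antisymm
  · exact Nat.sInf_le hmem
  · apply le_csInf ⟨3, hmem⟩
    rintro r ⟨z, ⟨hzx, hlx⟩, ⟨hzy, hly⟩⟩
    have hb := P_all k z hzx hzy
    rw [XL_length] at hlx
    omega

/-- For odd `n ≥ 13`, the sequences `x = 101010 ∘ a_{n-8} ∘ 10` and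
`y = 011001 ∘ a_{n-8} ∘ 01` satisfy `d_L(x,y) = 3`. -/
theorem stmt16 (n : ℕ) (hn : 13 ≤ n) (hodd : Odd n) :
    levDist ([true, false, true, false, true, false] ++ altSeq (n - 8) ++ [true, false])
            ([false, true, true, false, false, true] ++ altSeq (n - 8) ++ [false, true])
      = 3 := by
  obtain ⟨j, hj⟩ := hodd
  have hmk : n - 8 = 2 * (j - 5) + 3 := by omega
  show levDist (XL (n - 8)) (YL (n - 8)) = 3
  rw [hmk]
  exact stmt16' (j - 5)
end
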